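/- arXiv:2102.12704 — 4 statements merged into one kernel-verified Lean document; each statement's English description precedes it below -/
import Mathlib

section
/- Let $n = 2k+1$ be odd and let $\mu$ be a symmetric discrete probability measure on $[-1/2,1/2]$ whose support consists of at most $n$ points. Then $a(\mu) := 2\int_{(0,1/2]} (\mu(-z,z])^2 \, \mu(dz) \le \frac{(n-1)(n+1)}{3n^2}$, with equality when $\mu$ is uniform on $n$ points of the form $\{-x_k, \dots, -x_1, 0, x_1, \dots, x_k\}$ with $0 < x_1 < \cdots < x_k \le 1/2$. -/
open MeasureTheory Set ENNReal

/-- The quantity `a(μ) = 2 ∫_{(0,1/2]} μ(-z,z]² dμ(z)`. -/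
noncomputable def aQuant (μ : Measure ℝ) : ℝ :=
  2 * ∫ z in Ioc (0 : ℝ) (1/2), ((μ (Ioc (-z) z)).toReal) ^ 2 ∂μ

open Finset in
lemma tele (w : ℝ → ℝ) (A : ℝ) (P : Finset ℝ) :
    ∑ x ∈ P, 2 * w x * (A + 2 * ∑ y ∈ P.filter (· < x), w y + w x) ^ 2
      = ((A + 2 * ∑ y ∈ P, w y) ^ 3 - A ^ 3) / 3 - (2/3) * ∑ x ∈ P, (w x) ^ 3 := by
  induction P using Finset.induction_on_max with
  | empty => simp
  | insert a P ha ih =>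
    have haP : a ∉ P := fun h => lt_irrefl a (ha a h)
    rw [Finset.sum_insert haP, Finset.sum_insert haP, Finset.sum_insert haP]
    have h1 : (insert a P).filter (· < a) = P := by
      rw [Finset.filter_insert, if_neg (lt_irrefl a), Finset.filter_true_of_mem ha]
    have h3 : ∑ x ∈ P, 2 * w x * (A + 2 * ∑ y ∈ (insert a P).filter (· < x), w y + w x) ^ 2
        = ∑ x ∈ P, 2 * w x * (A + 2 * ∑ y ∈ P.filter (· < x), w y + w x) ^ 2 := by
      refine Finset.sum_congr rfl fun x hx => ?_
      rw [Finset.filter_insert, if_neg (not_lt.2 (le_of_lt (ha x hx)))]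
    rw [h1, h3, ih]
    ring

lemma measure_finset_sum (μ : Measure ℝ) (t : Finset ℝ) :
    μ (↑t : Set ℝ) = ∑ x ∈ t, μ {x} := by
  have h : (↑t : Set ℝ) = ⋃ x ∈ t, {x} := by ext y; simp
  rw [h, measure_biUnion_finset ?_ (fun x _ => measurableSet_singleton x)]
  intro x _ y _ hxy
  simp [Function.onFun, Set.disjoint_singleton, hxy]

open Classical in
lemma key_apply (μ : Measure ℝ) (t : Finset ℝ)
    (ht0 : μ (↑t : Set ℝ)ᶜ = 0) (A : Set ℝ) :
    μ A = ∑ x ∈ t.filter (fun y => y ∈ A), μ {x} := by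
  have h2 : μ A = μ (A ∩ ↑t) := by
    have : A ∩ ↑t = A \ (↑t)ᶜ := by ext y; simp [Set.mem_diff]
    rw [this, measure_diff_null ht0]
  have h3 : A ∩ ↑t = ↑(t.filter (fun y => y ∈ A)) := by
    ext y; simp [and_comm]
  rw [h2, h3, measure_finset_sum]

open Classical in
lemma key_apply' (μ : Measure ℝ) (t : Finset ℝ)
    (ht0 : μ (↑t : Set ℝ)ᶜ = 0) (A : Set ℝ) :
    μ A = ∑ x ∈ t, A.indicator (fun x => μ {x}) x := by
  rw [key_apply μ t ht0 A, Finset.sum_filter]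
  refine Finset.sum_congr rfl fun x _ => ?_
  by_cases hx : x ∈ A <;> simp [hx, Set.indicator_apply]

open Classical in
lemma restrict_eq_sum (μ : Measure ℝ) (t : Finset ℝ)
    (ht0 : μ (↑t : Set ℝ)ᶜ = 0) (S : Set ℝ) :
    μ.restrict S = ∑ x ∈ t.filter (fun y => y ∈ S), μ {x} • Measure.dirac x := by
  ext A hA
  rw [Measure.restrict_apply hA, key_apply μ t ht0 (A ∩ S)]
  rw [Measure.finset_sum_apply]
  rw [Finset.sum_filter, Finset.sum_filter]
  refine Finset.sum_congr rfl fun x _ => ?_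
  by_cases hxS : x ∈ S <;> by_cases hxA : x ∈ A <;>
    simp [hxS, hxA, Measure.smul_apply, Measure.dirac_apply' x hA, Set.indicator_apply]

lemma integrable_dirac_real {f : ℝ → ℝ} (hf : Measurable f) (x : ℝ) :
    Integrable f (Measure.dirac x) := by
  refine ⟨hf.aestronglyMeasurable, ?_⟩
  rw [HasFiniteIntegral, lintegral_dirac]
  exact ENNReal.coe_lt_top

open Classical in
lemma integral_restrict_eq (μ : Measure ℝ) [IsFiniteMeasure μ] (t : Finset ℝ)
    (ht0 : μ (↑t : Set ℝ)ᶜ = 0) (S : Set ℝ)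
    {f : ℝ → ℝ} (hf : Measurable f) :
    ∫ z in S, f z ∂μ = ∑ x ∈ t, S.indicator (fun x => (μ {x}).toReal * f x) x := by
  rw [restrict_eq_sum μ t ht0 S]
  rw [integral_finset_sum_measure (fun x _ =>
    (integrable_dirac_real hf x).smul_measure (measure_ne_top μ _))]
  rw [Finset.sum_filter]
  refine Finset.sum_congr rfl fun x _ => ?_
  by_cases hxS : x ∈ S <;>
    simp [hxS, Set.indicator_apply, integral_smul_measure, integral_dirac]

lemma master (μ : Measure ℝ) [IsProbabilityMeasure μ] (t : Finset ℝ)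
    (ht0 : μ (↑t : Set ℝ)ᶜ = 0)
    (hIcc : ∀ x ∈ t, x ∈ Icc (-(1/2) : ℝ) (1/2))
    (htneg : ∀ x ∈ t, -x ∈ t)
    (hwneg : ∀ x : ℝ, μ {-x} = μ {x}) :
    aQuant μ = 1/3 - (1/3) * ∑ x ∈ t, ((μ {x}).toReal) ^ 3 := by
  set w : ℝ → ℝ := fun x => (μ {x}).toReal with hw
  have hwsym : ∀ y : ℝ, w (-y) = w y := fun y => by rw [hw]; simp only [hwneg y]
  set Q : Finset ℝ := t.filter (fun y => 0 < y ∧ y ≤ 1/2) with hQ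
  set T0 : Finset ℝ := t.filter (fun y => y = 0) with hT0
  set A : ℝ := ∑ y ∈ T0, w y with hA
  have MR : ∀ B : Set ℝ, (μ B).toReal = ∑ x ∈ t, B.indicator w x := by
    intro B
    rw [key_apply' μ t ht0 B, ENNReal.toReal_sum (fun x _ => ?_)]
    · refine Finset.sum_congr rfl fun x _ => ?_
      by_cases hx : x ∈ B <;> simp [hx, Set.indicator_apply, hw]
    · by_cases hx : x ∈ B <;> simp [hx, Set.indicator_apply, measure_ne_top μ]
  have hposQ : ∀ y ∈ t, 0 < y → y ∈ Q := by
    intro y hy h0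
    exact Finset.mem_filter.2 ⟨hy, ⟨h0, (hIcc y hy).2⟩⟩
  have hnegQ : ∀ y ∈ t, y < 0 → -y ∈ Q := by
    intro y hy h0
    exact hposQ _ (htneg y hy) (by linarith)
  have hQpos : ∀ y ∈ Q, 0 < y ∧ y ≤ 1/2 := fun y hy => (Finset.mem_filter.1 hy).2
  have hQt : ∀ y ∈ Q, y ∈ t := fun y hy => (Finset.mem_filter.1 hy).1
  have hsplit : t = (T0 ∪ Q) ∪ Q.image (fun y => -y) := by
    ext y
    constructor
    · intro hy
      rcases lt_trichotomy y 0 with h | h | h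
      · refine Finset.mem_union.2 (Or.inr (Finset.mem_image.2 ⟨-y, hnegQ y hy h, by ring⟩))
      · exact Finset.mem_union.2 (Or.inl (Finset.mem_union.2
          (Or.inl (Finset.mem_filter.2 ⟨hy, h⟩))))
      · exact Finset.mem_union.2 (Or.inl (Finset.mem_union.2 (Or.inr (hposQ y hy h))))
    · intro hy
      rcases Finset.mem_union.1 hy with h | h
      · rcases Finset.mem_union.1 h with h' | h'
        · exact (Finset.mem_filter.1 h').1
        · exact hQt y h'
      · obtain ⟨z, hz, rfl⟩ := Finset.mem_image.1 h
        exact htneg z (hQt z hz)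
  have hd1 : Disjoint T0 Q := by
    rw [Finset.disjoint_left]
    intro y hy hyQ
    have h1 := (Finset.mem_filter.1 hy).2
    have h2 := (hQpos y hyQ).1
    simp [h1] at h2
  have hd2 : Disjoint (T0 ∪ Q) (Q.image (fun y => -y)) := by
    rw [Finset.disjoint_left]
    intro y hy hyI
    obtain ⟨z, hz, hzy⟩ := Finset.mem_image.1 hyI
    have hz0 := (hQpos z hz).1
    have hy0 : y < 0 := by rw [← hzy]; linarith
    rcases Finset.mem_union.1 hy with h | h
    · have := (Finset.mem_filter.1 h).2; simp [this] at hy0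
    · have := (hQpos y h).1; linarith
  have hsum : ∀ g : ℝ → ℝ, (∀ y, g (-y) = g y) →
      ∑ y ∈ t, g y = (∑ y ∈ T0, g y) + 2 * ∑ y ∈ Q, g y := by
    intro g hg
    conv_lhs => rw [hsplit]
    rw [Finset.sum_union hd2, Finset.sum_union hd1, Finset.sum_image
      (fun a _ b _ h => neg_injective h)]
    have : ∑ y ∈ Q, g (-y) = ∑ y ∈ Q, g y := Finset.sum_congr rfl fun y _ => hg y
    rw [this]; ring
  have htotal : A + 2 * ∑ y ∈ Q, w y = 1 := by
    have h1 : (μ Set.univ).toReal = 1 := by simp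
    rw [MR Set.univ] at h1
    simp only [Set.indicator_univ] at h1
    rw [hsum w hwsym] at h1
    exact h1
  have hT0sub : T0 ⊆ {0} := by
    intro y hy
    simp [Finset.mem_singleton, (Finset.mem_filter.1 hy).2]
  have hAcube : ∑ y ∈ T0, (w y) ^ 3 = A ^ 3 := by
    rcases Finset.subset_singleton_iff.1 hT0sub with h | h <;> simp [hA, h]
  have hcube : ∑ x ∈ t, (w x) ^ 3 = A ^ 3 + 2 * ∑ y ∈ Q, (w y) ^ 3 := by
    rw [hsum (fun y => (w y)^3) (fun y => by simp only [hwsym]), hAcube]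
  have hF : ∀ x ∈ Q, (μ (Ioc (-x) x)).toReal
      = A + 2 * (∑ y ∈ Q.filter (· < x), w y) + w x := by
    intro x hx
    obtain ⟨hx0, hx2⟩ := hQpos x hx
    rw [MR]
    conv_lhs => rw [hsplit]
    rw [Finset.sum_union hd2, Finset.sum_union hd1, Finset.sum_image
      (fun a _ b _ h => neg_injective h)]
    have hS1 : ∑ y ∈ T0, (Ioc (-x) x).indicator w y = A := by
      refine Finset.sum_congr rfl fun y hy => ?_
      have hy0 : y = 0 := (Finset.mem_filter.1 hy).2
      subst hy0
      exact Set.indicator_of_mem (mem_Ioc.2 ⟨by linarith, le_of_lt hx0⟩) w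
    have hS2 : ∑ y ∈ Q, (Ioc (-x) x).indicator w y = ∑ y ∈ Q.filter (· ≤ x), w y := by
      conv_rhs => rw [Finset.sum_filter]
      refine Finset.sum_congr rfl fun y hy => ?_
      obtain ⟨hy0, _⟩ := hQpos y hy
      by_cases h : y ≤ x
      · rw [Set.indicator_of_mem (mem_Ioc.2 ⟨by linarith, h⟩), if_pos h]
      · rw [Set.indicator_of_notMem (fun c => h (mem_Ioc.1 c).2), if_neg h]
    have hS3 : ∑ y ∈ Q, (Ioc (-x) x).indicator w (-y) = ∑ y ∈ Q.filter (· < x), w y := by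
      conv_rhs => rw [Finset.sum_filter]
      refine Finset.sum_congr rfl fun y hy => ?_
      obtain ⟨hy0, _⟩ := hQpos y hy
      by_cases h : y < x
      · rw [Set.indicator_of_mem (mem_Ioc.2 ⟨by linarith, by linarith⟩), if_pos h, hwsym]
      · rw [Set.indicator_of_notMem (fun c => h (by have := (mem_Ioc.1 c).1; linarith)), if_neg h]
    have h6 : Q.filter (· ≤ x) = insert x (Q.filter (· < x)) := by
      ext y
      simp only [Finset.mem_filter, Finset.mem_insert]
      constructor
      · rintro ⟨hy, hyx⟩
        rcases eq_or_lt_of_le hyx with h | h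
        · exact Or.inl h
        · exact Or.inr ⟨hy, h⟩
      · rintro (rfl | ⟨hy, hyx⟩)
        · exact ⟨hx, le_refl _⟩
        · exact ⟨hy, le_of_lt hyx⟩
    rw [hS1, hS2, hS3, h6, Finset.sum_insert (by simp [Finset.mem_filter])]
    ring
  have hfmono : Monotone (fun z : ℝ => ((μ (Ioc (-z) z)).toReal) ^ 2) := by
    intro a b hab
    have h1 : μ (Ioc (-a) a) ≤ μ (Ioc (-b) b) :=
      measure_mono (Ioc_subset_Ioc (neg_le_neg hab) hab)
    have h2 := ENNReal.toReal_mono (measure_ne_top μ _) h1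
    exact pow_le_pow_left₀ ENNReal.toReal_nonneg h2 2
  rw [aQuant, integral_restrict_eq μ t ht0 _ hfmono.measurable]
  have h7 : ∑ x ∈ t, (Ioc (0:ℝ) (1/2)).indicator
        (fun x => (μ {x}).toReal * ((μ (Ioc (-x) x)).toReal) ^ 2) x
      = ∑ x ∈ Q, w x * (A + 2 * (∑ y ∈ Q.filter (· < x), w y) + w x) ^ 2 := by
    rw [Finset.sum_filter]
    refine Finset.sum_congr rfl fun x hxt => ?_
    rw [Set.indicator_apply]
    by_cases h : 0 < x ∧ x ≤ 1/2
    · rw [if_pos (mem_Ioc.2 h), if_pos h, hF x (Finset.mem_filter.2 ⟨hxt, h⟩)]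
    · rw [if_neg (fun c => h (mem_Ioc.1 c)), if_neg h]
  rw [h7, Finset.mul_sum]
  have h8 : ∑ x ∈ Q, 2 * (w x * (A + 2 * (∑ y ∈ Q.filter (· < x), w y) + w x) ^ 2)
      = ∑ x ∈ Q, 2 * w x * (A + 2 * (∑ y ∈ Q.filter (· < x), w y) + w x) ^ 2 := by
    refine Finset.sum_congr rfl fun x _ => by ring
  rw [h8, tele w A Q, htotal, hcube]
  ring

open Classical in
lemma part1 (k n : ℕ) (hn : n = 2 * k + 1) (μ : Measure ℝ) [IsProbabilityMeasure μ]
    (hIcc0 : μ (Icc (-(1/2) : ℝ) (1/2))ᶜ = 0)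
    (hsym : Measure.map (fun x : ℝ => -x) μ = μ)
    (s : Finset ℝ) (hcard : s.card ≤ n) (hs : μ (↑s : Set ℝ)ᶜ = 0) :
    aQuant μ ≤ ((n : ℝ) - 1) * ((n : ℝ) + 1) / (3 * (n : ℝ) ^ 2) := by
  have hwneg : ∀ x : ℝ, μ {-x} = μ {x} := by
    intro x
    have h1 := congrArg (fun m : Measure ℝ => m {x}) hsym
    rw [Measure.map_apply measurable_neg (measurableSet_singleton x)] at h1
    have hpre : (fun y : ℝ => -y) ⁻¹' {x} = {-x} := by
      ext y; simp [Set.mem_preimage, neg_eq_iff_eq_neg, eq_comm]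
    rw [hpre] at h1
    exact h1
  set t : Finset ℝ := s.filter (fun y => μ {y} ≠ 0) with htdef
  have hts : t ⊆ s := Finset.filter_subset _ _
  have htmem : ∀ y, y ∈ t ↔ (y ∈ s ∧ μ {y} ≠ 0) := fun y => Finset.mem_filter
  have ht0 : μ (↑t : Set ℝ)ᶜ = 0 := by
    have h1 : μ (↑(s \ t) : Set ℝ) = 0 := by
      rw [measure_finset_sum]
      refine Finset.sum_eq_zero fun y hy => ?_
      obtain ⟨hys, hyt⟩ := Finset.mem_sdiff.1 hy
      by_contra h
      exact hyt ((htmem y).2 ⟨hys, h⟩)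
    refine measure_mono_null (fun y hy => ?_) (measure_union_null hs h1)
    by_cases hys : y ∈ s
    · exact Or.inr (by simpa using Finset.mem_sdiff.2 ⟨hys, fun c => hy (by simpa using c)⟩)
    · exact Or.inl (by simpa using hys)
  have hIcc : ∀ y ∈ t, y ∈ Icc (-(1/2) : ℝ) (1/2) := by
    intro y hy
    by_contra h
    exact ((htmem y).1 hy).2 (measure_mono_null (Set.singleton_subset_iff.2 h) hIcc0)
  have htneg : ∀ y ∈ t, -y ∈ t := by
    intro y hy
    obtain ⟨hys, hy0⟩ := (htmem y).1 hy
    have h1 : μ {-y} ≠ 0 := by rw [hwneg]; exact hy0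
    have h2 : -y ∈ s := by
      by_contra h
      exact h1 (measure_mono_null (Set.singleton_subset_iff.2 (by simpa using h)) hs)
    exact (htmem (-y)).2 ⟨h2, h1⟩
  rw [master μ t ht0 hIcc htneg hwneg]
  set w : ℝ → ℝ := fun y => (μ {y}).toReal with hw
  have hsum1 : ∑ y ∈ t, w y = 1 := by
    have h1 : μ Set.univ = ∑ y ∈ t, Set.univ.indicator (fun y => μ {y}) y :=
      key_apply' μ t ht0 Set.univ
    simp only [Set.indicator_univ, measure_univ] at h1
    have h2 := congrArg ENNReal.toReal h1
    rw [ENNReal.toReal_sum (fun y _ => measure_ne_top μ _)] at h2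
    simpa using h2.symm
  have htne : t.Nonempty := by
    by_contra h
    rw [Finset.not_nonempty_iff_eq_empty] at h
    rw [h] at hsum1
    simp at hsum1
  have hcardt : 0 < t.card := Finset.card_pos.2 htne
  have hcardn : t.card ≤ n := le_trans (Finset.card_le_card hts) hcard
  have hn1 : (1:ℕ) ≤ n := by omega
  have hnR : (0:ℝ) < (n:ℝ) := by exact_mod_cast Nat.lt_of_lt_of_le Nat.zero_lt_one hn1
  have hpm := pow_sum_div_card_le_sum_pow (s := t) (f := w)
    (fun i _ => ENNReal.toReal_nonneg) 2
  rw [hsum1] at hpm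
  have hcR : (0:ℝ) < (t.card : ℝ) := by exact_mod_cast hcardt
  have h3 : 1 / ((n:ℝ))^2 ≤ ∑ y ∈ t, (w y) ^ 3 := by
    refine le_trans ?_ hpm
    rw [one_pow]
    apply div_le_div_of_nonneg_left one_pos.le (by positivity)
    · exact pow_le_pow_left₀ (by positivity) (by exact_mod_cast hcardn) 2
  have hfinal : 1 / 3 - 1 / 3 * ∑ y ∈ t, (w y) ^ 3 ≤ (↑n - 1) * (↑n + 1) / (3 * (n:ℝ) ^ 2) := by
    have h4 : (↑n - 1) * (↑n + 1) / (3 * (n:ℝ) ^ 2) = 1/3 - 1/3 * (1 / (n:ℝ)^2) := by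
      field_simp
      ring
    rw [h4]
    nlinarith [h3]
  exact hfinal

lemma part2 (k n : ℕ) (hn : n = 2 * k + 1) (x : Fin k → ℝ) (hmono : StrictMono x)
    (hpos : ∀ i, 0 < x i) (hhalf : ∀ i, x i ≤ 1/2) (μ : Measure ℝ)
    (hμ : μ = ((n : ℝ≥0∞))⁻¹ •
        (Measure.dirac (0 : ℝ) +
          ∑ i : Fin k, (Measure.dirac (x i) + Measure.dirac (-(x i))))) :
    aQuant μ = ((n : ℝ) - 1) * ((n : ℝ) + 1) / (3 * (n : ℝ) ^ 2) := by
  have hinj : Function.Injective x := hmono.injective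
  have hnne : (n : ℝ≥0∞) ≠ 0 := by simp [hn]
  have hntop : (n : ℝ≥0∞) ≠ ⊤ := by simp
  have hval : ∀ B : Set ℝ, MeasurableSet B → μ B = (n : ℝ≥0∞)⁻¹ *
      (B.indicator 1 0 + ∑ i : Fin k, (B.indicator 1 (x i) + B.indicator 1 (-(x i)))) := by
    intro B hB
    rw [hμ]
    rw [Measure.smul_apply, smul_eq_mul]
    congr 1
    rw [Measure.add_apply, Measure.finset_sum_apply]
    rw [Measure.dirac_apply' _ hB]
    congr 1
    refine Finset.sum_congr rfl fun i _ => ?_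
    rw [Measure.add_apply, Measure.dirac_apply' _ hB, Measure.dirac_apply' _ hB]
  have hone : ∀ y a : ℝ, a = y → ({y} : Set ℝ).indicator (1 : ℝ → ℝ≥0∞) a = 1 := by
    intro y a h
    rw [Set.indicator_of_mem (Set.mem_singleton_iff.2 h)]; rfl
  have hzero : ∀ y a : ℝ, a ≠ y → ({y} : Set ℝ).indicator (1 : ℝ → ℝ≥0∞) a = 0 := by
    intro y a h
    exact Set.indicator_of_notMem (fun c => h (Set.mem_singleton_iff.1 c)) _
  -- singleton values
  have hw0 : μ {(0:ℝ)} = (n : ℝ≥0∞)⁻¹ := by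
    rw [hval _ (measurableSet_singleton _), hone 0 0 rfl]
    have hz : ∀ i : Fin k, ({(0:ℝ)} : Set ℝ).indicator (1 : ℝ → ℝ≥0∞) (x i)
        + ({(0:ℝ)} : Set ℝ).indicator (1 : ℝ → ℝ≥0∞) (-(x i)) = 0 := by
      intro i
      rw [hzero _ _ (hpos i).ne', hzero _ _ (by intro c; linarith [hpos i])]
      simp
    rw [Finset.sum_congr rfl (fun i _ => hz i)]
    simp
  have hwx : ∀ j, μ {x j} = (n : ℝ≥0∞)⁻¹ := by
    intro j
    rw [hval _ (measurableSet_singleton _), hzero _ _ (hpos j).ne]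
    have hz : ∀ i : Fin k, ({x j} : Set ℝ).indicator (1 : ℝ → ℝ≥0∞) (x i)
        + ({x j} : Set ℝ).indicator (1 : ℝ → ℝ≥0∞) (-(x i)) = if i = j then 1 else 0 := by
      intro i
      rw [hzero (x j) (-(x i)) (by intro c; linarith [hpos i, hpos j]), add_zero]
      by_cases h : i = j
      · rw [hone _ _ (by rw [h]), if_pos h]
      · rw [hzero _ _ (fun c => h (hinj c)), if_neg h]
    rw [Finset.sum_congr rfl (fun i _ => hz i)]
    simp
  have hwnx : ∀ j, μ {-(x j)} = (n : ℝ≥0∞)⁻¹ := by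
    intro j
    rw [hval _ (measurableSet_singleton _), hzero (-(x j)) 0 (by intro c; linarith [hpos j])]
    have hz : ∀ i : Fin k, ({-(x j)} : Set ℝ).indicator (1 : ℝ → ℝ≥0∞) (x i)
        + ({-(x j)} : Set ℝ).indicator (1 : ℝ → ℝ≥0∞) (-(x i)) = if i = j then 1 else 0 := by
      intro i
      rw [hzero (-(x j)) (x i) (by intro c; linarith [hpos i, hpos j]), zero_add]
      by_cases h : i = j
      · rw [hone _ _ (by rw [h]), if_pos h]
      · rw [hzero _ _ (fun c => h (hinj (neg_injective c))), if_neg h]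
    rw [Finset.sum_congr rfl (fun i _ => hz i)]
    simp
  haveI hprob : IsProbabilityMeasure μ := by
    constructor
    rw [hval _ MeasurableSet.univ]
    simp only [Set.indicator_univ, Pi.one_apply]
    rw [Finset.sum_const, Finset.card_univ, Fintype.card_fin]
    have h2 : (1 : ℝ≥0∞) + k • ((1:ℝ≥0∞) + 1) = (n : ℝ≥0∞) := by
      rw [hn]; push_cast; rw [nsmul_eq_mul]; ring
    rw [h2, ENNReal.inv_mul_cancel hnne hntop]
  classical
  set t : Finset ℝ := insert (0:ℝ)
    ((Finset.univ.image x) ∪ (Finset.univ.image (fun i => -(x i)))) with htdef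
  have hmem : ∀ y : ℝ, y ∈ t ↔ (y = 0 ∨ (∃ i, x i = y) ∨ (∃ i, -(x i) = y)) := by
    intro y
    simp [htdef, Finset.mem_insert, Finset.mem_union, Finset.mem_image, eq_comm]
  have ht0 : μ (↑t : Set ℝ)ᶜ = 0 := by
    rw [hval _ (t.measurableSet.compl)]
    have hind : ∀ a : ℝ, a ∈ t → ((↑t : Set ℝ)ᶜ).indicator (1 : ℝ → ℝ≥0∞) a = 0 := by
      intro a ha
      exact Set.indicator_of_notMem (by simpa using ha) 1
    rw [hind 0 ((hmem 0).2 (Or.inl rfl))]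
    have hz : ∀ i : Fin k, ((↑t : Set ℝ)ᶜ).indicator (1 : ℝ → ℝ≥0∞) (x i)
        + ((↑t : Set ℝ)ᶜ).indicator (1 : ℝ → ℝ≥0∞) (-(x i)) = 0 := by
      intro i
      rw [hind _ ((hmem _).2 (Or.inr (Or.inl ⟨i, rfl⟩))),
        hind _ ((hmem _).2 (Or.inr (Or.inr ⟨i, rfl⟩)))]
      simp
    rw [Finset.sum_congr rfl (fun i _ => hz i)]
    simp
  have hIcc : ∀ y ∈ t, y ∈ Icc (-(1/2) : ℝ) (1/2) := by
    intro y hy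
    rcases (hmem y).1 hy with rfl | ⟨i, rfl⟩ | ⟨i, rfl⟩
    · constructor <;> norm_num
    · exact ⟨by nlinarith [hpos i], hhalf i⟩
    · exact ⟨by nlinarith [hhalf i], by nlinarith [hpos i]⟩
  have htneg : ∀ y ∈ t, -y ∈ t := by
    intro y hy
    rcases (hmem y).1 hy with rfl | ⟨i, rfl⟩ | ⟨i, rfl⟩
    · exact (hmem _).2 (Or.inl (by norm_num))
    · exact (hmem _).2 (Or.inr (Or.inr ⟨i, rfl⟩))
    · exact (hmem _).2 (Or.inr (Or.inl ⟨i, by ring⟩))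
  have hwneg : ∀ y : ℝ, μ {-y} = μ {y} := by
    intro y
    rw [hval _ (measurableSet_singleton _), hval _ (measurableSet_singleton _)]
    have hI : ∀ a : ℝ, ({-y} : Set ℝ).indicator (1 : ℝ → ℝ≥0∞) a
        = ({y} : Set ℝ).indicator (1 : ℝ → ℝ≥0∞) (-a) := by
      intro a
      by_cases h : a = -y
      · rw [Set.indicator_of_mem (Set.mem_singleton_iff.2 h),
          Set.indicator_of_mem (Set.mem_singleton_iff.2 (by rw [h]; ring))]
        simp
      · rw [Set.indicator_of_notMem (fun c => h (Set.mem_singleton_iff.1 c)),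
          Set.indicator_of_notMem (fun c => h (by
            have := Set.mem_singleton_iff.1 c; linarith))]
    simp only [hI, neg_zero, neg_neg]
    congr 2
    exact Finset.sum_congr rfl fun i _ => add_comm _ _
  rw [master μ t ht0 hIcc htneg hwneg]
  -- compute the cube sum
  have hnotin : (0:ℝ) ∉ (Finset.univ.image x) ∪ (Finset.univ.image (fun i => -(x i))) := by
    simp only [Finset.mem_union, Finset.mem_image, Finset.mem_univ, true_and, not_or,
      not_exists]
    exact ⟨fun i => (hpos i).ne', fun i => by intro c; linarith [hpos i]⟩
  have hdisj : Disjoint (Finset.univ.image x) (Finset.univ.image (fun i => -(x i))) := by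
    rw [Finset.disjoint_left]
    intro y hy1 hy2
    obtain ⟨i, _, rfl⟩ := Finset.mem_image.1 hy1
    obtain ⟨j, _, hj⟩ := Finset.mem_image.1 hy2
    have := hpos i; have := hpos j
    linarith [hj]
  have hsum3 : ∑ y ∈ t, ((μ {y}).toReal) ^ 3 = (2 * (k:ℝ) + 1) * ((n:ℝ)⁻¹) ^ 3 := by
    rw [htdef, Finset.sum_insert hnotin, Finset.sum_union hdisj,
      Finset.sum_image (fun a _ b _ h => hinj h),
      Finset.sum_image (fun a _ b _ h => hinj (neg_injective h))]
    have e1 : ((μ {(0:ℝ)}).toReal) ^ 3 = ((n:ℝ)⁻¹) ^ 3 := by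
      rw [hw0]; simp [ENNReal.toReal_inv]
    have e2 : ∀ i : Fin k, ((μ {x i}).toReal) ^ 3 = ((n:ℝ)⁻¹) ^ 3 := by
      intro i; rw [hwx]; simp [ENNReal.toReal_inv]
    have e3 : ∀ i : Fin k, ((μ {-(x i)}).toReal) ^ 3 = ((n:ℝ)⁻¹) ^ 3 := by
      intro i; rw [hwnx]; simp [ENNReal.toReal_inv]
    rw [e1, Finset.sum_congr rfl (fun i _ => e2 i), Finset.sum_congr rfl (fun i _ => e3 i)]
    simp [Finset.sum_const, Finset.card_univ]
    ring
  rw [hsum3]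
  have hnR : (n:ℝ) = 2 * (k:ℝ) + 1 := by rw [hn]; push_cast; ring
  have hnne' : (n:ℝ) ≠ 0 := by rw [hnR]; positivity
  rw [← hnR]
  field_simp
  ring

theorem stmt_6 (k : ℕ) (n : ℕ) (hn : n = 2 * k + 1) :
    (∀ μ : Measure ℝ, IsProbabilityMeasure μ →
      μ (Icc (-(1/2) : ℝ) (1/2))ᶜ = 0 →
      Measure.map (fun x : ℝ => -x) μ = μ →
      (∃ s : Finset ℝ, s.card ≤ n ∧ μ (↑s : Set ℝ)ᶜ = 0) →
      aQuant μ ≤ ((n : ℝ) - 1) * ((n : ℝ) + 1) / (3 * (n : ℝ) ^ 2)) ∧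
    (∀ x : Fin k → ℝ, StrictMono x → (∀ i, 0 < x i) → (∀ i, x i ≤ 1/2) →
      ∀ μ : Measure ℝ,
        μ = ((n : ℝ≥0∞))⁻¹ •
          (Measure.dirac (0 : ℝ) +
            ∑ i : Fin k, (Measure.dirac (x i) + Measure.dirac (-(x i)))) →
        aQuant μ = ((n : ℝ) - 1) * ((n : ℝ) + 1) / (3 * (n : ℝ) ^ 2)) := by
  constructor
  · rintro μ hprob hIcc0 hsym ⟨s, hcard, hs⟩
    haveI := hprob
    exact part1 k n hn μ hIcc0 hsym s hcard hs
  · intro x hmono hpos hhalf μ hμ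
    exact part2 k n hn x hmono hpos hhalf μ hμ
end

section
/- Let $\mu = \rho$ be a symmetric probability measure on $[-1/2,1/2]$, and set $a = 2\int_{(0,1/2]} (\mu(-z,z])^2\,\mu(dz)$, $r = 2\int_{(0,1/2]} z\,\mu(-z,z]\,\mu(dz)$, $m = 2r$. Then $r - am = r(1 - 2a) \ge 0$, with equality if and only if $\mu = \delta_0$. -/
open MeasureTheory Set Filter

noncomputable def eI (x z : ℝ) : ℝ := if x ≤ z then 1 else 0
noncomputable def fI (x z : ℝ) : ℝ := if x < z then 1 else 0

lemma eI_eq_indicator (z : ℝ) : (fun x => eI x z) = (Iic z).indicator (fun _ => (1:ℝ)) := by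
  ext x; simp [eI, Set.indicator_apply]

lemma fI_eq_indicator (z : ℝ) : (fun x => fI x z) = (Iio z).indicator (fun _ => (1:ℝ)) := by
  ext x; simp [fI, Set.indicator_apply]

lemma eI_nonneg (x z : ℝ) : 0 ≤ eI x z := by unfold eI; split_ifs <;> norm_num
lemma eI_le_one (x z : ℝ) : eI x z ≤ 1 := by unfold eI; split_ifs <;> norm_num
lemma fI_nonneg (x z : ℝ) : 0 ≤ fI x z := by unfold fI; split_ifs <;> norm_num
lemma fI_le_one (x z : ℝ) : fI x z ≤ 1 := by unfold fI; split_ifs <;> norm_num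

lemma meas_eI_left (z : ℝ) : Measurable fun x => eI x z := by
  rw [eI_eq_indicator]; exact measurable_const.indicator measurableSet_Iic
lemma meas_fI_left (z : ℝ) : Measurable fun x => fI x z := by
  rw [fI_eq_indicator]; exact measurable_const.indicator measurableSet_Iio
lemma meas_eI_right (c : ℝ) : Measurable fun t => eI c t := by
  have : (fun t => eI c t) = (Ici c).indicator (fun _ => (1:ℝ)) := by
    ext t; simp [eI, Set.indicator_apply]
  rw [this]; exact measurable_const.indicator measurableSet_Ici
lemma meas_fI_right (c : ℝ) : Measurable fun t => fI c t := by
  have : (fun t => fI c t) = (Ioi c).indicator (fun _ => (1:ℝ)) := by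
    ext t; simp [fI, Set.indicator_apply]
  rw [this]; exact measurable_const.indicator measurableSet_Ioi
lemma meas_eI2 : Measurable fun p : ℝ × ℝ => eI p.1 p.2 := by
  have : (fun p : ℝ × ℝ => eI p.1 p.2) = ({p : ℝ × ℝ | p.1 ≤ p.2}).indicator (fun _ => (1:ℝ)) := by
    ext p; simp [eI, Set.indicator_apply]
  rw [this]; exact measurable_const.indicator (measurableSet_le measurable_fst measurable_snd)
lemma meas_fI2 : Measurable fun p : ℝ × ℝ => fI p.1 p.2 := by
  have : (fun p : ℝ × ℝ => fI p.1 p.2) = ({p : ℝ × ℝ | p.1 < p.2}).indicator (fun _ => (1:ℝ)) := by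
    ext p; simp [fI, Set.indicator_apply]
  rw [this]; exact measurable_const.indicator (measurableSet_lt measurable_fst measurable_snd)
lemma meas_eI2' : Measurable fun p : ℝ × ℝ => eI p.2 p.1 := by
  have : (fun p : ℝ × ℝ => eI p.2 p.1) = ({p : ℝ × ℝ | p.2 ≤ p.1}).indicator (fun _ => (1:ℝ)) := by
    ext p; simp [eI, Set.indicator_apply]
  rw [this]; exact measurable_const.indicator (measurableSet_le measurable_snd measurable_fst)
lemma meas_fI2' : Measurable fun p : ℝ × ℝ => fI p.2 p.1 := by
  have : (fun p : ℝ × ℝ => fI p.2 p.1) = ({p : ℝ × ℝ | p.2 < p.1}).indicator (fun _ => (1:ℝ)) := by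
    ext p; simp [fI, Set.indicator_apply]
  rw [this]; exact measurable_const.indicator (measurableSet_lt measurable_snd measurable_fst)

lemma integrable_bdd {α : Type*} [MeasurableSpace α] {ν : Measure α} [IsFiniteMeasure ν]
    {g : α → ℝ} (hm : AEStronglyMeasurable g ν) {C : ℝ} (hb : ∀ x, |g x| ≤ C) :
    Integrable g ν :=
  (integrable_const C).mono' hm (ae_of_all _ (by simpa [Real.norm_eq_abs] using hb))

lemma toReal_prob_le_one {α : Type*} [MeasurableSpace α] {μ : Measure α}
    [IsProbabilityMeasure μ] (s : Set α) : (μ s).toReal ≤ 1 := by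
  simpa using ENNReal.toReal_mono (by simp) (prob_le_one (μ := μ) (s := s))

set_option linter.unusedSectionVars false
section Core
variable {ν : Measure ℝ} [IsProbabilityMeasure ν]

lemma integral_eI (z : ℝ) : ∫ x, eI x z ∂ν = (ν (Iic z)).toReal := by
  rw [eI_eq_indicator, integral_indicator_const (1:ℝ) measurableSet_Iic, smul_eq_mul, mul_one]; rfl

lemma integral_fI (z : ℝ) : ∫ x, fI x z ∂ν = (ν (Iio z)).toReal := by
  rw [fI_eq_indicator, integral_indicator_const (1:ℝ) measurableSet_Iio, smul_eq_mul, mul_one]; rfl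

lemma integrable_eI (z : ℝ) : Integrable (fun x => eI x z) ν :=
  integrable_bdd (meas_eI_left z).aestronglyMeasurable (C := 1)
    (fun x => abs_le.mpr ⟨by linarith [eI_nonneg x z], eI_le_one x z⟩)

lemma integrable_fI (z : ℝ) : Integrable (fun x => fI x z) ν :=
  integrable_bdd (meas_fI_left z).aestronglyMeasurable (C := 1)
    (fun x => abs_le.mpr ⟨by linarith [fI_nonneg x z], fI_le_one x z⟩)

lemma integral_two (p q d : ℝ) :
    ∫ t, (p * eI t d + q * fI t d) ∂ν
      = p * (ν (Iic d)).toReal + q * (ν (Iio d)).toReal := by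
  rw [integral_add ((integrable_eI d).const_mul p) ((integrable_fI d).const_mul q),
    integral_const_mul, integral_const_mul, integral_eI, integral_fI]

end Core

lemma fI_eq (u v : ℝ) : fI u v = 1 - eI v u := by
  unfold eI fI; split_ifs <;> (try norm_num) <;> linarith

set_option maxHeartbeats 1000000 in
lemma cyc (x y z : ℝ) :
    (eI x z * eI y z + eI x z * fI y z + fI x z * fI y z) +
    (eI y x * eI z x + eI y x * fI z x + fI y x * fI z x) +
    (eI z y * eI x y + eI z y * fI x y + fI z y * fI x y) ≤ 3 := by
  simp only [fI_eq]
  unfold eI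
  split_ifs <;> first | norm_num | linarith

lemma pb {a b : ℝ} (ha0 : 0 ≤ a) (ha1 : a ≤ 1) (hb0 : 0 ≤ b) (hb1 : b ≤ 1) :
    0 ≤ a * b ∧ a * b ≤ 1 :=
  ⟨mul_nonneg ha0 hb0, by nlinarith⟩

lemma core (ν : Measure ℝ) [IsProbabilityMeasure ν] :
    ∫ z, ((ν (Iic z)).toReal ^ 2 + (ν (Iic z)).toReal * (ν (Iio z)).toReal
      + (ν (Iio z)).toReal ^ 2) ∂ν ≤ 1 := by
  set H : ℝ → ℝ := fun z => (ν (Iic z)).toReal with hHdef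
  set h : ℝ → ℝ := fun z => (ν (Iio z)).toReal with hhdef
  have hHm : Measurable H :=
    Monotone.measurable (fun i j hij => ENNReal.toReal_mono (measure_ne_top _ _)
      (measure_mono (Iic_subset_Iic.mpr hij)))
  have hhm : Measurable h :=
    Monotone.measurable (fun i j hij => ENNReal.toReal_mono (measure_ne_top _ _)
      (measure_mono (Iio_subset_Iio hij)))
  have hH0 : ∀ t, 0 ≤ H t := fun t => ENNReal.toReal_nonneg
  have hH1 : ∀ t, H t ≤ 1 := fun t => toReal_prob_le_one _
  have hh0 : ∀ t, 0 ≤ h t := fun t => ENNReal.toReal_nonneg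
  have hh1 : ∀ t, h t ≤ 1 := fun t => toReal_prob_le_one _
  have key : ∀ p q d : ℝ, ∫ t, (p * eI t d + q * fI t d) ∂ν = p * H d + q * h d := by
    intro p q d; simpa [hHdef, hhdef] using integral_two (ν := ν) p q d
  -- inner integrals over y
  have hA : ∀ z x, ∫ y, (eI x z * eI y z + eI x z * fI y z + fI x z * fI y z) ∂ν
      = eI x z * H z + (eI x z + fI x z) * h z := by
    intro z x
    have e1 : (fun y => eI x z * eI y z + eI x z * fI y z + fI x z * fI y z)
        = fun y => (eI x z) * eI y z + (eI x z + fI x z) * fI y z := by funext y; ring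
    rw [e1, key]
  have hB : ∀ z x, ∫ y, (eI y x * eI z x + eI y x * fI z x + fI y x * fI z x) ∂ν
      = (eI z x + fI z x) * H x + fI z x * h x := by
    intro z x
    have e1 : (fun y => eI y x * eI z x + eI y x * fI z x + fI y x * fI z x)
        = fun y => (eI z x + fI z x) * eI y x + (fI z x) * fI y x := by funext y; ring
    rw [e1, key]
  have hC : ∀ z y, ∫ x, (eI z y * eI x y + eI z y * fI x y + fI z y * fI x y) ∂ν
      = eI z y * H y + (eI z y + fI z y) * h y := by
    intro z y
    have e1 : (fun x => eI z y * eI x y + eI z y * fI x y + fI z y * fI x y)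
        = fun x => (eI z y) * eI x y + (eI z y + fI z y) * fI x y := by funext x; ring
    rw [e1, key]
  -- outer integrals
  have hAout : ∀ z, ∫ x, (eI x z * H z + (eI x z + fI x z) * h z) ∂ν
      = H z * H z + H z * h z + h z * h z := by
    intro z
    have e1 : (fun x => eI x z * H z + (eI x z + fI x z) * h z)
        = fun x => (H z + h z) * eI x z + (h z) * fI x z := by funext x; ring
    rw [e1, key]; ring
  have hBout : ∀ x, ∫ z, ((eI z x + fI z x) * H x + fI z x * h x) ∂ν
      = H x * H x + H x * h x + h x * h x := by
    intro x
    have e1 : (fun z => (eI z x + fI z x) * H x + fI z x * h x)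
        = fun z => (H x) * eI z x + (H x + h x) * fI z x := by funext z; ring
    rw [e1, key]; ring
  have hCout : ∀ y, ∫ z, (eI z y * H y + (eI z y + fI z y) * h y) ∂ν
      = H y * H y + H y * h y + h y * h y := by
    intro y
    have e1 : (fun z => eI z y * H y + (eI z y + fI z y) * h y)
        = fun z => (H y + h y) * eI z y + (h y) * fI z y := by funext z; ring
    rw [e1, key]; ring
  -- bounds on products
  have hCbdd : ∀ z x, |∫ y, (eI z y * eI x y + eI z y * fI x y + fI z y * fI x y) ∂ν| ≤ 3 := by
    intro z x
    have hint : Integrable (fun y => eI z y * eI x y + eI z y * fI x y + fI z y * fI x y) ν := by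
      refine integrable_bdd ?_ (C := 3) ?_
      · exact ((((meas_eI_right z).mul (meas_eI_right x)).add
          ((meas_eI_right z).mul (meas_fI_right x))).add
          ((meas_fI_right z).mul (meas_fI_right x))).aestronglyMeasurable
      · intro y
        rw [abs_le]
        have p1 := pb (eI_nonneg z y) (eI_le_one z y) (eI_nonneg x y) (eI_le_one x y)
        have p2 := pb (eI_nonneg z y) (eI_le_one z y) (fI_nonneg x y) (fI_le_one x y)
        have p3 := pb (fI_nonneg z y) (fI_le_one z y) (fI_nonneg x y) (fI_le_one x y)
        constructor <;> linarith [p1.1, p1.2, p2.1, p2.2, p3.1, p3.2]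
    rw [abs_le]
    constructor
    · have h1 : (0:ℝ) ≤ ∫ y, (eI z y * eI x y + eI z y * fI x y + fI z y * fI x y) ∂ν := by
        apply integral_nonneg
        intro y
        have := eI_nonneg z y; have := eI_nonneg x y
        have := fI_nonneg z y; have := fI_nonneg x y
        positivity
      linarith
    · have h2 : ∫ y, (eI z y * eI x y + eI z y * fI x y + fI z y * fI x y) ∂ν
          ≤ ∫ _, (3:ℝ) ∂ν := by
        apply integral_mono hint (integrable_const 3)
        intro y
        have p1 := pb (eI_nonneg z y) (eI_le_one z y) (eI_nonneg x y) (eI_le_one x y)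
        have p2 := pb (eI_nonneg z y) (eI_le_one z y) (fI_nonneg x y) (fI_le_one x y)
        have p3 := pb (fI_nonneg z y) (fI_le_one z y) (fI_nonneg x y) (fI_le_one x y)
        show eI z y * eI x y + eI z y * fI x y + fI z y * fI x y ≤ 3
        linarith [p1.2, p2.2, p3.2]
      simpa using h2
  -- integrable on products
  have intB2 : Integrable (Function.uncurry fun z x =>
      (eI z x + fI z x) * H x + fI z x * h x) (ν.prod ν) := by
    refine integrable_bdd ?_ (C := 3) ?_
    · exact (((meas_eI2.add meas_fI2).mul (hHm.comp measurable_snd)).add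
        (meas_fI2.mul (hhm.comp measurable_snd))).aestronglyMeasurable
    · rintro ⟨z, x⟩
      simp only [Function.uncurry]
      have ex : (eI z x + fI z x) * H x + fI z x * h x
          = eI z x * H x + fI z x * H x + fI z x * h x := by ring
      rw [ex, abs_le]
      have p1 := pb (eI_nonneg z x) (eI_le_one z x) (hH0 x) (hH1 x)
      have p2 := pb (fI_nonneg z x) (fI_le_one z x) (hH0 x) (hH1 x)
      have p3 := pb (fI_nonneg z x) (fI_le_one z x) (hh0 x) (hh1 x)
      constructor <;> linarith [p1.1, p1.2, p2.1, p2.2, p3.1, p3.2]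
  have intC2 : Integrable (Function.uncurry fun z x =>
      ∫ y, (eI z y * eI x y + eI z y * fI x y + fI z y * fI x y) ∂ν) (ν.prod ν) := by
    refine integrable_bdd ?_ (C := 3) ?_
    · have hg : Measurable (fun q : (ℝ × ℝ) × ℝ =>
          eI q.1.1 q.2 * eI q.1.2 q.2 + eI q.1.1 q.2 * fI q.1.2 q.2
            + fI q.1.1 q.2 * fI q.1.2 q.2) := by
        have m1 : Measurable (fun q : (ℝ × ℝ) × ℝ => eI q.1.1 q.2) :=
          meas_eI2.comp ((measurable_fst.comp measurable_fst).prodMk measurable_snd)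
        have m2 : Measurable (fun q : (ℝ × ℝ) × ℝ => eI q.1.2 q.2) :=
          meas_eI2.comp ((measurable_snd.comp measurable_fst).prodMk measurable_snd)
        have m3 : Measurable (fun q : (ℝ × ℝ) × ℝ => fI q.1.1 q.2) :=
          meas_fI2.comp ((measurable_fst.comp measurable_fst).prodMk measurable_snd)
        have m4 : Measurable (fun q : (ℝ × ℝ) × ℝ => fI q.1.2 q.2) :=
          meas_fI2.comp ((measurable_snd.comp measurable_fst).prodMk measurable_snd)
        exact ((m1.mul m2).add (m1.mul m4)).add (m3.mul m4)
      exact (hg.stronglyMeasurable.integral_prod_right').aestronglyMeasurable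
    · rintro ⟨z, x⟩
      exact hCbdd z x
  have intCswap : ∀ z, Integrable (Function.uncurry fun x y =>
      (eI z y * eI x y + eI z y * fI x y + fI z y * fI x y)) (ν.prod ν) := by
    intro z
    refine integrable_bdd ?_ (C := 3) ?_
    · have m1 : Measurable (fun p : ℝ × ℝ => eI z p.2) := (meas_eI_right z).comp measurable_snd
      have m3 : Measurable (fun p : ℝ × ℝ => fI z p.2) := (meas_fI_right z).comp measurable_snd
      exact (((m1.mul meas_eI2).add (m1.mul meas_fI2)).add (m3.mul meas_fI2)).aestronglyMeasurable
    · rintro ⟨x, y⟩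
      simp only [Function.uncurry]
      rw [abs_le]
      have p1 := pb (eI_nonneg z y) (eI_le_one z y) (eI_nonneg x y) (eI_le_one x y)
      have p2 := pb (eI_nonneg z y) (eI_le_one z y) (fI_nonneg x y) (fI_le_one x y)
      have p3 := pb (fI_nonneg z y) (fI_le_one z y) (fI_nonneg x y) (fI_le_one x y)
      constructor <;> linarith [p1.1, p1.2, p2.1, p2.2, p3.1, p3.2]
  have intC'2 : Integrable (Function.uncurry fun z y =>
      eI z y * H y + (eI z y + fI z y) * h y) (ν.prod ν) := by
    refine integrable_bdd ?_ (C := 3) ?_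
    · exact ((meas_eI2.mul (hHm.comp measurable_snd)).add
        ((meas_eI2.add meas_fI2).mul (hhm.comp measurable_snd))).aestronglyMeasurable
    · rintro ⟨z, y⟩
      simp only [Function.uncurry]
      have ex : eI z y * H y + (eI z y + fI z y) * h y
          = eI z y * H y + (eI z y * h y + fI z y * h y) := by ring
      rw [ex, abs_le]
      have p1 := pb (eI_nonneg z y) (eI_le_one z y) (hH0 y) (hH1 y)
      have p2 := pb (eI_nonneg z y) (eI_le_one z y) (hh0 y) (hh1 y)
      have p3 := pb (fI_nonneg z y) (fI_le_one z y) (hh0 y) (hh1 y)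
      constructor <;> linarith [p1.1, p1.2, p2.1, p2.2, p3.1, p3.2]
  -- Piece 2 : ∫z ∫x Bclosed = T
  have TB : ∫ z, (∫ x, ((eI z x + fI z x) * H x + fI z x * h x) ∂ν) ∂ν
      = ∫ x, (H x * H x + H x * h x + h x * h x) ∂ν := by
    rw [integral_integral_swap intB2]
    exact integral_congr_ae (Eventually.of_forall (fun x => hBout x))
  -- Piece 3 : ∫z ∫x Cfun = T
  have TCinner : ∀ z, ∫ x, (∫ y, (eI z y * eI x y + eI z y * fI x y + fI z y * fI x y) ∂ν) ∂ν
      = ∫ y, (eI z y * H y + (eI z y + fI z y) * h y) ∂ν := by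
    intro z
    rw [integral_integral_swap (intCswap z)]
    exact integral_congr_ae (Eventually.of_forall (fun y => hC z y))
  have TC : ∫ z, (∫ x, (∫ y, (eI z y * eI x y + eI z y * fI x y + fI z y * fI x y) ∂ν) ∂ν) ∂ν
      = ∫ y, (H y * H y + H y * h y + h y * h y) ∂ν := by
    have e1 : ∫ z, (∫ x, (∫ y, (eI z y * eI x y + eI z y * fI x y + fI z y * fI x y) ∂ν) ∂ν) ∂ν
        = ∫ z, (∫ y, (eI z y * H y + (eI z y + fI z y) * h y) ∂ν) ∂ν :=
      integral_congr_ae (Eventually.of_forall (fun z => TCinner z))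
    rw [e1, integral_integral_swap intC'2]
    exact integral_congr_ae (Eventually.of_forall (fun y => hCout y))
  -- integrability of single-variable functions
  have intK : Integrable (fun t => H t * H t + H t * h t + h t * h t) ν := by
    refine integrable_bdd ?_ (C := 3) ?_
    · exact (((hHm.mul hHm).add (hHm.mul hhm)).add (hhm.mul hhm)).aestronglyMeasurable
    · intro t
      rw [abs_le]
      have p1 := pb (hH0 t) (hH1 t) (hH0 t) (hH1 t)
      have p2 := pb (hH0 t) (hH1 t) (hh0 t) (hh1 t)
      have p3 := pb (hh0 t) (hh1 t) (hh0 t) (hh1 t)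
      constructor <;> linarith [p1.1, p1.2, p2.1, p2.2, p3.1, p3.2]
  have intAcl : ∀ z, Integrable (fun x => eI x z * H z + (eI x z + fI x z) * h z) ν := by
    intro z
    have e1 : (fun x => eI x z * H z + (eI x z + fI x z) * h z)
        = fun x => (H z + h z) * eI x z + (h z) * fI x z := by funext x; ring
    rw [e1]
    exact ((integrable_eI z).const_mul _).add ((integrable_fI z).const_mul _)
  have intBcl : ∀ z, Integrable (fun x => (eI z x + fI z x) * H x + fI z x * h x) ν := by
    intro z
    refine integrable_bdd ?_ (C := 3) ?_
    · exact ((((meas_eI_right z).add (meas_fI_right z)).mul hHm).add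
        ((meas_fI_right z).mul hhm)).aestronglyMeasurable
    · intro x
      have ex : (eI z x + fI z x) * H x + fI z x * h x
          = eI z x * H x + fI z x * H x + fI z x * h x := by ring
      rw [ex, abs_le]
      have p1 := pb (eI_nonneg z x) (eI_le_one z x) (hH0 x) (hH1 x)
      have p2 := pb (fI_nonneg z x) (fI_le_one z x) (hH0 x) (hH1 x)
      have p3 := pb (fI_nonneg z x) (fI_le_one z x) (hh0 x) (hh1 x)
      constructor <;> linarith [p1.1, p1.2, p2.1, p2.2, p3.1, p3.2]
  have intCcl : ∀ z, Integrable
      (fun x => ∫ y, (eI z y * eI x y + eI z y * fI x y + fI z y * fI x y) ∂ν) ν := by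
    intro z
    refine integrable_bdd ?_ (C := 3) ?_
    · have hg : Measurable (fun p : ℝ × ℝ =>
          eI z p.2 * eI p.1 p.2 + eI z p.2 * fI p.1 p.2 + fI z p.2 * fI p.1 p.2) := by
        have m1 : Measurable (fun p : ℝ × ℝ => eI z p.2) := (meas_eI_right z).comp measurable_snd
        have m3 : Measurable (fun p : ℝ × ℝ => fI z p.2) := (meas_fI_right z).comp measurable_snd
        exact ((m1.mul meas_eI2).add (m1.mul meas_fI2)).add (m3.mul meas_fI2)
      exact (hg.stronglyMeasurable.integral_prod_right').aestronglyMeasurable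
    · intro x
      exact hCbdd z x
  -- integrable in y for the three cyclic integrands, given x z
  have intk1 : ∀ z x, Integrable
      (fun y => eI x z * eI y z + eI x z * fI y z + fI x z * fI y z) ν := by
    intro z x
    exact (((integrable_eI z).const_mul _).add ((integrable_fI z).const_mul _)).add
      ((integrable_fI z).const_mul _)
  have intk2 : ∀ z x, Integrable
      (fun y => eI y x * eI z x + eI y x * fI z x + fI y x * fI z x) ν := by
    intro z x
    exact (((integrable_eI x).mul_const _).add ((integrable_eI x).mul_const _)).add
      ((integrable_fI x).mul_const _)
  have intk3 : ∀ z x, Integrable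
      (fun y => eI z y * eI x y + eI z y * fI x y + fI z y * fI x y) ν := by
    intro z x
    refine integrable_bdd ?_ (C := 3) ?_
    · exact ((((meas_eI_right z).mul (meas_eI_right x)).add
        ((meas_eI_right z).mul (meas_fI_right x))).add
        ((meas_fI_right z).mul (meas_fI_right x))).aestronglyMeasurable
    · intro y
      rw [abs_le]
      have p1 := pb (eI_nonneg z y) (eI_le_one z y) (eI_nonneg x y) (eI_le_one x y)
      have p2 := pb (eI_nonneg z y) (eI_le_one z y) (fI_nonneg x y) (fI_le_one x y)
      have p3 := pb (fI_nonneg z y) (fI_le_one z y) (fI_nonneg x y) (fI_le_one x y)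
      constructor <;> linarith [p1.1, p1.2, p2.1, p2.2, p3.1, p3.2]
  -- Piece 4 : pointwise-in-z bound
  have piece4 : ∀ z, (H z * H z + H z * h z + h z * h z)
      + (∫ x, ((eI z x + fI z x) * H x + fI z x * h x) ∂ν)
      + (∫ x, (∫ y, (eI z y * eI x y + eI z y * fI x y + fI z y * fI x y) ∂ν) ∂ν) ≤ 3 := by
    intro z
    have intAB : Integrable (fun x => eI x z * H z + (eI x z + fI x z) * h z
        + ((eI z x + fI z x) * H x + fI z x * h x)) ν := (intAcl z).add (intBcl z)
    rw [← hAout z, ← integral_add (intAcl z) (intBcl z), ← integral_add intAB (intCcl z)]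
    refine le_trans (integral_mono (intAB.add (intCcl z)) (integrable_const 3) ?_) (by simp)
    intro x
    dsimp only
    have intk12 : Integrable (fun y => eI x z * eI y z + eI x z * fI y z + fI x z * fI y z
        + (eI y x * eI z x + eI y x * fI z x + fI y x * fI z x)) ν := (intk1 z x).add (intk2 z x)
    rw [← hA z x, ← hB z x, ← integral_add (intk1 z x) (intk2 z x),
      ← integral_add intk12 (intk3 z x)]
    refine le_trans (integral_mono (intk12.add (intk3 z x)) (integrable_const 3) ?_) (by simp)
    intro y
    dsimp only
    linarith [cyc x y z]
  -- assemble
  have goalEq : (fun z => H z ^ 2 + H z * h z + h z ^ 2)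
      = fun z => H z * H z + H z * h z + h z * h z := by funext z; ring
  rw [show (∫ z, (H z ^ 2 + H z * h z + h z ^ 2) ∂ν)
      = ∫ z, (H z * H z + H z * h z + h z * h z) ∂ν from by rw [goalEq]]
  have intBout : Integrable
      (fun z => ∫ x, ((eI z x + fI z x) * H x + fI z x * h x) ∂ν) ν :=
    intB2.integral_prod_left
  have intCout : Integrable
      (fun z => ∫ x, (∫ y, (eI z y * eI x y + eI z y * fI x y + fI z y * fI x y) ∂ν) ∂ν) ν :=
    intC2.integral_prod_left
  have sum_eq : (∫ z, (H z * H z + H z * h z + h z * h z) ∂ν)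
      + (∫ z, (H z * H z + H z * h z + h z * h z) ∂ν)
      + (∫ z, (H z * H z + H z * h z + h z * h z) ∂ν)
      = ∫ z, ((H z * H z + H z * h z + h z * h z)
        + (∫ x, ((eI z x + fI z x) * H x + fI z x * h x) ∂ν)
        + (∫ x, (∫ y, (eI z y * eI x y + eI z y * fI x y + fI z y * fI x y) ∂ν) ∂ν)) ∂ν := by
    have intKB : Integrable (fun z => H z * H z + H z * h z + h z * h z
        + ∫ x, ((eI z x + fI z x) * H x + fI z x * h x) ∂ν) ν := intK.add intBout
    nth_rewrite 2 [← TB]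
    nth_rewrite 2 [← TC]
    rw [← integral_add intK intBout, ← integral_add intKB intCout]
  have final : (∫ z, (H z * H z + H z * h z + h z * h z) ∂ν)
      + (∫ z, (H z * H z + H z * h z + h z * h z) ∂ν)
      + (∫ z, (H z * H z + H z * h z + h z * h z) ∂ν) ≤ 3 := by
    rw [sum_eq]
    have intKB : Integrable (fun z => H z * H z + H z * h z + h z * h z
        + ∫ x, ((eI z x + fI z x) * H x + fI z x * h x) ∂ν) ν := intK.add intBout
    refine le_trans (integral_mono (intKB.add intCout) (integrable_const 3) ?_) (by simp)
    intro z
    dsimp only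
    linarith [piece4 z]
  linarith

lemma mono_meas_toReal (μ : Measure ℝ) [IsFiniteMeasure μ] {s : ℝ → Set ℝ}
    (hs : ∀ ⦃i j : ℝ⦄, i ≤ j → s i ⊆ s j) : Monotone fun z => (μ (s z)).toReal :=
  fun i j hij => ENNReal.toReal_mono (measure_ne_top _ _) (measure_mono (hs hij))

lemma a_bound (μ : Measure ℝ) [IsProbabilityMeasure μ]
    (hsym : Measure.map (fun x : ℝ => -x) μ = μ) :
    ∫ z in Ioc (0:ℝ) (1/2), ((μ (Ioc (-z) z)).toReal) ^ 2 ∂μ ≤ 1/6 := by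
  set F : ℝ → ℝ := fun z => (μ (Ioc (-z) z)).toReal with hFdef
  set G : ℝ → ℝ := fun z => (μ (Icc (-z) z)).toReal with hGdef
  set g : ℝ → ℝ := fun z => (μ (Ioo (-z) z)).toReal with hgdef
  have hFmeas : Measurable F :=
    (mono_meas_toReal μ (fun i j hij => Ioc_subset_Ioc (neg_le_neg hij) hij)).measurable
  have hGmeas : Measurable G :=
    (mono_meas_toReal μ (fun i j hij => Icc_subset_Icc (neg_le_neg hij) hij)).measurable
  have hgmeas : Measurable g :=
    (mono_meas_toReal μ (fun i j hij => Ioo_subset_Ioo (neg_le_neg hij) hij)).measurable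
  have hF0 : ∀ z, 0 ≤ F z := fun z => ENNReal.toReal_nonneg
  have hF1 : ∀ z, F z ≤ 1 := fun z => toReal_prob_le_one _
  have hG0 : ∀ z, 0 ≤ G z := fun z => ENNReal.toReal_nonneg
  have hG1 : ∀ z, G z ≤ 1 := fun z => toReal_prob_le_one _
  have hg0 : ∀ z, 0 ≤ g z := fun z => ENNReal.toReal_nonneg
  have hg1 : ∀ z, g z ≤ 1 := fun z => toReal_prob_le_one _
  set K : ℝ → ℝ := fun z => G z ^ 2 + G z * g z + g z ^ 2 with hKdef
  have hKmeas : Measurable K := ((hGmeas.pow_const 2).add (hGmeas.mul hgmeas)).add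
    (hgmeas.pow_const 2)
  have hK0 : ∀ z, 0 ≤ K z := by
    intro z
    have := (pb (hG0 z) (hG1 z) (hg0 z) (hg1 z)).1
    have := sq_nonneg (G z); have := sq_nonneg (g z)
    simp only [hKdef]
    linarith
  have hK3 : ∀ z, K z ≤ 3 := by
    intro z
    have p1 := (pb (hG0 z) (hG1 z) (hG0 z) (hG1 z)).2
    have p2 := (pb (hG0 z) (hG1 z) (hg0 z) (hg1 z)).2
    have p3 := (pb (hg0 z) (hg1 z) (hg0 z) (hg1 z)).2
    simp only [hKdef]
    nlinarith
  -- pointwise bound F² ≤ K/3 on (0, 1/2]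
  have hpt : ∀ z ∈ Ioc (0:ℝ) (1/2), F z ^ 2 ≤ K z / 3 := by
    intro z hz
    have hz0 : (0:ℝ) < z := hz.1
    have h1 : Icc (-z) z = {-z} ∪ Ioc (-z) z := by
      ext x
      simp only [mem_Icc, mem_union, mem_singleton_iff, mem_Ioc]
      constructor
      · rintro ⟨hx1, hx2⟩
        rcases eq_or_lt_of_le hx1 with hh | hh
        · exact Or.inl hh.symm
        · exact Or.inr ⟨hh, hx2⟩
      · rintro (rfl | ⟨hx1, hx2⟩)
        · constructor <;> linarith
        · exact ⟨hx1.le, hx2⟩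
    have h2 : Ioc (-z) z = Ioo (-z) z ∪ {z} := by
      ext x
      simp only [mem_Ioc, mem_union, mem_singleton_iff, mem_Ioo]
      constructor
      · rintro ⟨hx1, hx2⟩
        rcases eq_or_lt_of_le hx2 with hh | hh
        · exact Or.inr hh
        · exact Or.inl ⟨hx1, hh⟩
      · rintro (⟨hx1, hx2⟩ | rfl)
        · exact ⟨hx1, hx2.le⟩
        · exact ⟨by linarith, le_rfl⟩
    have hm1 : μ (Icc (-z) z) = μ {-z} + μ (Ioc (-z) z) := by
      rw [h1, measure_union (Set.disjoint_singleton_left.mpr (by simp)) measurableSet_Ioc]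
    have hm2 : μ (Ioc (-z) z) = μ (Ioo (-z) z) + μ {z} := by
      rw [h2, measure_union (Set.disjoint_singleton_right.mpr (by simp)) (measurableSet_singleton z)]
    have hss : μ {-z} = μ {z} := by
      conv_lhs => rw [← hsym]
      rw [Measure.map_apply measurable_neg (measurableSet_singleton _)]
      congr 1
      ext x
      simp
    have ht1 : G z = (μ {z}).toReal + F z := by
      simp only [hGdef, hFdef]
      rw [hm1, hss, ENNReal.toReal_add (measure_ne_top _ _) (measure_ne_top _ _)]
    have ht2 : F z = g z + (μ {z}).toReal := by
      simp only [hgdef, hFdef]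
      rw [hm2, ENNReal.toReal_add (measure_ne_top _ _) (measure_ne_top _ _)]
    have hd0 : 0 ≤ (μ {z}).toReal := ENNReal.toReal_nonneg
    simp only [hKdef]
    rw [show G z = F z + (μ {z}).toReal from by linarith,
      show g z = F z - (μ {z}).toReal from by linarith]
    nlinarith [sq_nonneg ((μ {z}).toReal)]
  -- set-integral monotonicity
  have int1 : IntegrableOn (fun z => F z ^ 2) (Ioc (0:ℝ) (1/2)) μ := by
    refine (integrable_bdd (hFmeas.pow_const 2).aestronglyMeasurable (C := 1) ?_).integrableOn
    intro x
    rw [abs_le]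
    have := (pb (hF0 x) (hF1 x) (hF0 x) (hF1 x))
    constructor <;> nlinarith [this.1, this.2]
  have intK : Integrable K μ := by
    refine integrable_bdd hKmeas.aestronglyMeasurable (C := 3) ?_
    intro x
    rw [abs_le]
    constructor
    · linarith [hK0 x]
    · exact hK3 x
  have step1 : ∫ z in Ioc (0:ℝ) (1/2), F z ^ 2 ∂μ ≤ ∫ z in Ioc (0:ℝ) (1/2), K z / 3 ∂μ :=
    setIntegral_mono_on int1 (intK.div_const 3).integrableOn measurableSet_Ioc hpt
  rw [integral_div] at step1
  -- push-forward by abs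
  set ν : Measure ℝ := Measure.map (fun x : ℝ => |x|) μ with hνdef
  haveI : IsProbabilityMeasure ν := Measure.isProbabilityMeasure_map measurable_abs.aemeasurable
  have hid1 : ∀ t : ℝ, ν (Iic t) = μ (Icc (-t) t) := by
    intro t
    rw [hνdef, Measure.map_apply measurable_abs measurableSet_Iic]
    congr 1
    ext x
    simp [abs_le]
  have hid2 : ∀ t : ℝ, ν (Iio t) = μ (Ioo (-t) t) := by
    intro t
    rw [hνdef, Measure.map_apply measurable_abs measurableSet_Iio]
    congr 1
    ext x
    simp [abs_lt]
  have hcore := core ν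
  simp only [hid1, hid2] at hcore
  -- hcore : ∫ z, K z ∂ν ≤ 1  (after recognizing the integrand)
  have hcore2 : ∫ z, K (|z|) ∂μ ≤ 1 := by
    have hmap : ∫ z, K z ∂ν = ∫ z, K (|z|) ∂μ := by
      rw [hνdef]
      exact integral_map measurable_abs.aemeasurable hKmeas.aestronglyMeasurable
    have hcoreK : ∫ z, K z ∂ν ≤ 1 := by
      simpa only [hKdef, hGdef, hgdef] using hcore
    rw [← hmap]
    exact hcoreK
  have hKabs_int : Integrable (fun x => K |x|) μ :=
    integrable_bdd ((hKmeas.comp measurable_abs).aestronglyMeasurable) (C := 3)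
      (fun x => abs_le.mpr ⟨by linarith [hK0 |x|], hK3 |x|⟩)
  have hsplit : (∫ x in Iio (0:ℝ), K |x| ∂μ) + (∫ x in Ici (0:ℝ), K |x| ∂μ)
      = ∫ x, K |x| ∂μ := by
    have := integral_add_compl (measurableSet_Iio (a := (0:ℝ))) hKabs_int
    rwa [compl_Iio] at this
  have hneg : ∫ x in Iio (0:ℝ), K |x| ∂μ = ∫ x in Ioi (0:ℝ), K |x| ∂μ := by
    conv_lhs => rw [← hsym]
    rw [setIntegral_map (g := fun x : ℝ => -x) (f := fun x => K |x|) measurableSet_Iio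
      ((hKmeas.comp measurable_abs).aestronglyMeasurable)
      (measurable_neg : Measurable fun x : ℝ => -x).aemeasurable]
    have hpre : (fun x : ℝ => -x) ⁻¹' (Iio 0) = Ioi 0 := by
      ext x; simp
    rw [hpre]
    simp only [abs_neg]
  have hle1 : ∫ z in Ioc (0:ℝ) (1/2), K z ∂μ ≤ ∫ x in Ioi (0:ℝ), K |x| ∂μ := by
    have heq : ∫ z in Ioc (0:ℝ) (1/2), K z ∂μ = ∫ z in Ioc (0:ℝ) (1/2), K |z| ∂μ :=
      setIntegral_congr_fun measurableSet_Ioc (fun x hx => by rw [abs_of_pos hx.1])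
    rw [heq]
    refine setIntegral_mono_set hKabs_int.integrableOn
      (Eventually.of_forall fun x => hK0 |x|)
      (Eventually.of_forall fun x hx => Ioc_subset_Ioi_self hx)
  have hle2 : ∫ z in Ioc (0:ℝ) (1/2), K z ∂μ ≤ ∫ x in Ici (0:ℝ), K |x| ∂μ := by
    have heq : ∫ z in Ioc (0:ℝ) (1/2), K z ∂μ = ∫ z in Ioc (0:ℝ) (1/2), K |z| ∂μ :=
      setIntegral_congr_fun measurableSet_Ioc (fun x hx => by rw [abs_of_pos hx.1])
    rw [heq]
    refine setIntegral_mono_set hKabs_int.integrableOn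
      (Eventually.of_forall fun x => hK0 |x|)
      (Eventually.of_forall fun x hx => le_of_lt hx.1)
  linarith

lemma eq_dirac_aux (μ : Measure ℝ) [IsProbabilityMeasure μ]
    (hsupp : μ (Icc (-(1/2) : ℝ) (1/2))ᶜ = 0)
    (hsym : Measure.map (fun x : ℝ => -x) μ = μ)
    (h0 : ∫ z in Ioc (0:ℝ) (1/2), z * (μ (Ioc (-z) z)).toReal ∂μ = 0) :
    μ = Measure.dirac 0 := by
  set F : ℝ → ℝ := fun z => (μ (Ioc (-z) z)).toReal with hFdef
  have hFmeas : Measurable F :=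
    (mono_meas_toReal μ (fun i j hij => Ioc_subset_Ioc (neg_le_neg hij) hij)).measurable
  have hF0 : ∀ z, 0 ≤ F z := fun z => ENNReal.toReal_nonneg
  have hF1 : ∀ z, F z ≤ 1 := fun z => toReal_prob_le_one _
  have hint : Integrable (fun z => z * F z) (μ.restrict (Ioc (0:ℝ) (1/2))) := by
    refine Integrable.mono' (integrable_const 1)
      ((measurable_id.mul hFmeas).aestronglyMeasurable) ?_
    filter_upwards [ae_restrict_mem measurableSet_Ioc] with z hz
    rw [Real.norm_eq_abs, abs_mul, abs_of_pos hz.1]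
    have hFz : |F z| ≤ 1 := abs_le.mpr ⟨by linarith [hF0 z], hF1 z⟩
    nlinarith [abs_nonneg (F z), hz.1.le, hz.2]
  have hnn : 0 ≤ᵐ[μ.restrict (Ioc (0:ℝ) (1/2))] fun z => z * F z := by
    filter_upwards [ae_restrict_mem measurableSet_Ioc] with z hz
    exact mul_nonneg hz.1.le (hF0 z)
  have hae := (integral_eq_zero_iff_of_nonneg_ae hnn hint).mp h0
  have hae2 : ∀ᵐ z ∂μ, z ∈ Ioc (0:ℝ) (1/2) → μ (Ioc 0 z) = 0 := by
    have h' := (ae_restrict_iff' measurableSet_Ioc).mp hae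
    filter_upwards [h'] with z hz hmem
    have h1 : z * F z = 0 := by simpa using hz hmem
    have h2 : F z = 0 := by
      rcases mul_eq_zero.mp h1 with h | h
      · exact absurd h (ne_of_gt hmem.1)
      · exact h
    have h3 : μ (Ioc (-z) z) = 0 := by
      rcases (ENNReal.toReal_eq_zero_iff _).mp h2 with h | h
      · exact h
      · exact absurd h (measure_ne_top μ _)
    exact measure_mono_null (Ioc_subset_Ioc_left (by linarith [hmem.1])) h3
  have hN : μ {z | ¬ (z ∈ Ioc (0:ℝ) (1/2) → μ (Ioc 0 z) = 0)} = 0 := ae_iff.mp hae2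
  set Good := {z : ℝ | z ∈ Ioc (0:ℝ) (1/2) ∧ μ (Ioc 0 z) = 0} with hGooddef
  have hGoodnull : μ Good = 0 := by
    rcases Set.eq_empty_or_nonempty Good with hG | hG
    · rw [hG]; exact measure_empty
    · have hbdd : BddAbove Good := ⟨1/2, fun w hw => hw.1.2⟩
      by_cases ht : sSup Good ∈ Good
      · exact measure_mono_null
          (fun w hw => ⟨hw.1.1, le_csSup hbdd hw⟩ : Good ⊆ Ioc 0 (sSup Good)) ht.2
      · obtain ⟨u, hu_mono, hu_t, hu_mem⟩ := exists_seq_tendsto_sSup hG hbdd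
        have hIoo : μ (Ioo (0:ℝ) (sSup Good)) = 0 := by
          refine measure_mono_null (fun w hw => ?_)
            (measure_iUnion_null fun n => (hu_mem n).2)
          obtain ⟨n, hn⟩ := (hu_t.eventually (eventually_gt_nhds hw.2)).exists
          exact mem_iUnion.mpr ⟨n, ⟨hw.1, hn.le⟩⟩
        refine measure_mono_null (fun w hw => ?_) hIoo
        exact ⟨hw.1.1, lt_of_le_of_ne (le_csSup hbdd hw) (fun hh => ht (hh ▸ hw))⟩
  have hIoc0 : μ (Ioc (0:ℝ) (1/2)) = 0 := by
    refine measure_mono_null (fun z hz => ?_) (measure_union_null hN hGoodnull)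
    by_cases hc : μ (Ioc 0 z) = 0
    · exact Or.inr ⟨hz, hc⟩
    · exact Or.inl (fun himp => hc (himp hz))
  have hIco0 : μ (Ico (-(1/2):ℝ) 0) = 0 := by
    have heq : μ (Ico (-(1/2):ℝ) 0) = μ (Ioc (0:ℝ) (1/2)) := by
      conv_lhs => rw [← hsym]
      rw [Measure.map_apply measurable_neg measurableSet_Ico]
      congr 1
      ext x
      simp only [mem_preimage, mem_Ico, mem_Ioc]
      constructor
      · rintro ⟨h1, h2⟩; constructor <;> linarith
      · rintro ⟨h1, h2⟩; constructor <;> linarith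
    rw [heq, hIoc0]
  have hcomplnull : μ ({(0:ℝ)}ᶜ) = 0 := by
    refine measure_mono_null (fun x hx => ?_)
      (measure_union_null (measure_union_null hsupp hIco0) hIoc0)
    by_cases hin : x ∈ Icc (-(1/2):ℝ) (1/2)
    · rcases lt_or_gt_of_ne (hx : x ≠ 0) with h | h
      · exact Or.inl (Or.inr ⟨hin.1, h⟩)
      · exact Or.inr ⟨h, hin.2⟩
    · exact Or.inl (Or.inl hin)
  have h01 : μ {(0:ℝ)} = 1 := (prob_compl_eq_zero_iff (measurableSet_singleton 0)).mp hcomplnull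
  apply Measure.ext
  intro s hs
  by_cases h0s : (0:ℝ) ∈ s
  · have hs1 : μ s = 1 :=
      le_antisymm prob_le_one (h01 ▸ measure_mono (singleton_subset_iff.mpr h0s))
    rw [hs1, Measure.dirac_apply' _ hs]
    simp [h0s]
  · have hsub : s ⊆ ({(0:ℝ)}ᶜ) := by
      intro x hx
      simp only [mem_compl_iff, mem_singleton_iff]
      rintro rfl
      exact h0s hx
    rw [measure_mono_null hsub hcomplnull, Measure.dirac_apply' _ hs]
    simp [h0s]

theorem stmt_10 (μ : Measure ℝ) [IsProbabilityMeasure μ]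
    (hsupp : μ (Icc (-(1/2) : ℝ) (1/2))ᶜ = 0)
    (hsym : Measure.map (fun x : ℝ => -x) μ = μ)
    (a r m : ℝ)
    (ha : a = 2 * ∫ z in Ioc (0 : ℝ) (1/2), ((μ (Ioc (-z) z)).toReal) ^ 2 ∂μ)
    (hr : r = 2 * ∫ z in Ioc (0 : ℝ) (1/2), z * (μ (Ioc (-z) z)).toReal ∂μ)
    (hm : m = 2 * r) :
    r - a * m = r * (1 - 2 * a) ∧ 0 ≤ r - a * m ∧
      (r - a * m = 0 ↔ μ = Measure.dirac 0) := by
  have key1 : r - a * m = r * (1 - 2 * a) := by rw [hm]; ring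
  have hr0 : 0 ≤ r := by
    have h : 0 ≤ ∫ z in Ioc (0 : ℝ) (1/2), z * (μ (Ioc (-z) z)).toReal ∂μ :=
      setIntegral_nonneg measurableSet_Ioc
        (fun z hz => mul_nonneg hz.1.le ENNReal.toReal_nonneg)
    rw [hr]; linarith
  have ha13 : a ≤ 1/3 := by
    have := a_bound μ hsym
    rw [ha]; linarith
  refine ⟨key1, ?_, ?_⟩
  · rw [key1]
    apply mul_nonneg hr0
    linarith
  · constructor
    · intro h0
      have hrz : r = 0 := by
        rw [key1] at h0
        rcases mul_eq_zero.mp h0 with h | h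
        · exact h
        · linarith
      have hI0 : ∫ z in Ioc (0:ℝ) (1/2), z * (μ (Ioc (-z) z)).toReal ∂μ = 0 := by
        rw [hrz] at hr; linarith
      exact eq_dirac_aux μ hsupp hsym hI0
    · intro hd
      subst hd
      have hres : (Measure.dirac (0:ℝ)).restrict (Ioc (0:ℝ) (1/2)) = 0 :=
        Measure.restrict_eq_zero.mpr
          (by rw [Measure.dirac_apply' _ measurableSet_Ioc]; simp)
      rw [hres, integral_zero_measure, mul_zero] at hr
      rw [key1, hr, zero_mul]
end

section
/- Let $c, C > 0$ with $C < 3$ and $c \ge C^2/(3-C)$. Let $\rho, \mu$ be symmetric probability measures on $[-1/2,1/2]$ such that $c\,\rho(A) \le \mu(A) \le C\,\rho(A)$ for all Borel sets $A$. Define $a = 2\int_{(0,1/2]} (\rho(-z,z])^2\,\mu(dz)$, $r = 2\int_{(0,1/2]} z\,\rho(-z,z]\,\mu(dz)$, $s = 2\int_{(0,1/2]} y\,\mu(-y,y]\,\rho(dy)$, and $m = r + s$. Then $r - am \ge 0$. -/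
open MeasureTheory Set
open scoped ENNReal

namespace Stmt11Aux

lemma mono_Icc (ρ : Measure ℝ) : Measurable (fun z : ℝ => ρ (Icc (-z) z)) := by
  apply Monotone.measurable
  intro u v huv
  exact measure_mono (Icc_subset_Icc (neg_le_neg huv) huv)

lemma mono_Ioo (ρ : Measure ℝ) : Measurable (fun z : ℝ => ρ (Ioo (-z) z)) := by
  apply Monotone.measurable
  intro u v huv
  exact measure_mono (Ioo_subset_Ioo (neg_le_neg huv) huv)

lemma mono_Ioc (ρ : Measure ℝ) : Measurable (fun z : ℝ => ρ (Ioc (-z) z)) := by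
  apply Monotone.measurable
  intro u v huv
  exact measure_mono (Ioc_subset_Ioc (neg_le_neg huv) huv)

lemma evenT (ρ : Measure ℝ) [IsProbabilityMeasure ρ]
    (hsym : Measure.map (fun x : ℝ => -x) ρ = ρ) (f : ℝ → ℝ≥0∞) (hf : Measurable f) :
    ∫⁻ z in {(0:ℝ)}ᶜ, f |z| ∂ρ = 2 * ∫⁻ z in Ioi (0:ℝ), f z ∂ρ := by
  have hsym' : Measure.map (Neg.neg : ℝ → ℝ) ρ = ρ := hsym
  have hneg : (Neg.neg : ℝ → ℝ) ⁻¹' (Iio (0:ℝ)) = Ioi 0 := by ext x; simp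
  have hres : ρ.restrict (Iio (0:ℝ)) = Measure.map (Neg.neg : ℝ → ℝ) (ρ.restrict (Ioi 0)) := by
    conv_lhs => rw [← hsym']
    rw [Measure.restrict_map measurable_neg measurableSet_Iio, hneg]
  have habs : Measurable (fun z : ℝ => f |z|) := hf.comp measurable_abs
  have hIoi : ∫⁻ z in Ioi (0:ℝ), f |z| ∂ρ = ∫⁻ z in Ioi (0:ℝ), f z ∂ρ :=
    setLIntegral_congr_fun measurableSet_Ioi
      (fun x hx => by simp only [abs_of_pos (show (0:ℝ) < x from hx)])
  have hIio : ∫⁻ z in Iio (0:ℝ), f |z| ∂ρ = ∫⁻ z in Ioi (0:ℝ), f z ∂ρ := by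
    rw [hres, lintegral_map habs measurable_neg]
    simp only [abs_neg]
    exact hIoi
  have hsplit : ({(0:ℝ)}ᶜ : Set ℝ) = Iio 0 ∪ Ioi 0 := (Iio_union_Ioi).symm
  rw [hsplit, lintegral_union measurableSet_Ioi
    ((Iic_disjoint_Ioi le_rfl).mono_left Iio_subset_Iic_self), hIio, hIoi, two_mul]

/-- The key combinatorial bound: for a symmetric probability measure,
the sum of the three integrals is at most `1/2`. -/
lemma tripleBound (ρ : Measure ℝ) [IsProbabilityMeasure ρ]
    (hsym : Measure.map (fun x : ℝ => -x) ρ = ρ) :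
    ∫⁻ z in Ioi (0:ℝ), (ρ (Icc (-z) z))^2 ∂ρ
      + ∫⁻ z in Ioi (0:ℝ), ρ (Icc (-z) z) * ρ (Ioo (-z) z) ∂ρ
      + ∫⁻ z in Ioi (0:ℝ), (ρ (Ioo (-z) z))^2 ∂ρ ≤ 1/2 := by
  classical
  set H : ℝ → ℝ≥0∞ := fun t => ρ (Icc (-t) t) with hHdef
  set K : ℝ → ℝ≥0∞ := fun t => ρ (Ioo (-t) t) with hKdef
  have mH : Measurable H := mono_Icc ρ
  have mK : Measurable K := mono_Ioo ρ
  set π : Measure (ℝ × ℝ × ℝ) := ρ.prod (ρ.prod ρ) with hπdef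
  -- the three sets
  set A₁ : Set (ℝ × ℝ × ℝ) := {p | |p.2.1| ≤ |p.1| ∧ |p.2.2| ≤ |p.1|} with hA₁def
  set A₂ : Set (ℝ × ℝ × ℝ) := {p | |p.1| < |p.2.1| ∧ |p.2.2| ≤ |p.2.1|} with hA₂def
  set A₃ : Set (ℝ × ℝ × ℝ) := {p | |p.1| < |p.2.2| ∧ |p.2.1| < |p.2.2|} with hA₃def
  have mabs1 : Measurable (fun p : ℝ × ℝ × ℝ => |p.1|) := measurable_fst.abs
  have mabs2 : Measurable (fun p : ℝ × ℝ × ℝ => |p.2.1|) :=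
    (measurable_fst.comp measurable_snd).abs
  have mabs3 : Measurable (fun p : ℝ × ℝ × ℝ => |p.2.2|) :=
    (measurable_snd.comp measurable_snd).abs
  have mA₁ : MeasurableSet A₁ := (measurableSet_le mabs2 mabs1).inter (measurableSet_le mabs3 mabs1)
  have mA₂ : MeasurableSet A₂ := (measurableSet_lt mabs1 mabs2).inter (measurableSet_le mabs3 mabs2)
  have mA₃ : MeasurableSet A₃ := (measurableSet_lt mabs1 mabs3).inter (measurableSet_lt mabs2 mabs3)
  -- π A₁
  have hπA₁ : π A₁ = ∫⁻ z, (H |z|)^2 ∂ρ := by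
    rw [hπdef, Measure.prod_apply mA₁]
    congr 1
    funext z
    have : (Prod.mk z ⁻¹' A₁ : Set (ℝ × ℝ)) = Icc (-|z|) |z| ×ˢ Icc (-|z|) |z| := by
      ext q
      simp only [mem_preimage, hA₁def, mem_setOf_eq, mem_prod, mem_Icc, abs_le]
    rw [this, Measure.prod_prod, sq]
  -- π A₂
  have hπA₂ : π A₂ = ∫⁻ x, H |x| * K |x| ∂ρ := by
    rw [hπdef, Measure.prod_apply mA₂]
    have hslice : (fun z => (ρ.prod ρ) (Prod.mk z ⁻¹' A₂))
        = fun z => ∫⁻ x, ({p : ℝ × ℝ | |p.1| < |p.2|}.indicator (fun p => H |p.2|)) (z, x) ∂ρ := by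
      funext z
      have hm : MeasurableSet (Prod.mk z ⁻¹' A₂ : Set (ℝ × ℝ)) :=
        measurable_prodMk_left mA₂
      rw [Measure.prod_apply hm]
      congr 1
      funext x
      by_cases h : |z| < |x|
      · have : (Prod.mk x ⁻¹' (Prod.mk z ⁻¹' A₂) : Set ℝ) = Icc (-|x|) |x| := by
          ext y; simp [hA₂def, abs_le, h]
        rw [this]
        simp [indicator, h, hHdef]
      · have : (Prod.mk x ⁻¹' (Prod.mk z ⁻¹' A₂) : Set ℝ) = (∅ : Set ℝ) := by
          ext y; simp [hA₂def, h]
        rw [this]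
        simp [indicator, h]
    rw [hslice]
    have hFm : Measurable (fun p : ℝ × ℝ => ({p : ℝ × ℝ | |p.1| < |p.2|}.indicator
        (fun p => H |p.2|)) p) := by
      exact (mH.comp measurable_snd.abs).indicator
        (measurableSet_lt measurable_fst.abs measurable_snd.abs)
    rw [lintegral_lintegral_swap hFm.aemeasurable]
    congr 1
    funext x
    have : (fun z => ({p : ℝ × ℝ | |p.1| < |p.2|}.indicator (fun p => H |p.2|)) (z, x))
        = (Ioo (-|x|) |x|).indicator (fun _ => H |x|) := by
      funext z
      by_cases h : |z| < |x|
      · simp [indicator, h, abs_lt.mp h]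
      · have h2 : z ∉ Ioo (-|x|) |x| := by
          simp only [mem_Ioo, not_and_or]
          rcases not_lt.mp h with h'
          rcases abs_lt.not.mp (not_lt.mpr h') with h''
          tauto
        simp [indicator, h, h2]
    rw [this, lintegral_indicator measurableSet_Ioo, setLIntegral_const]
  -- π A₃
  have hπA₃ : π A₃ = ∫⁻ y, K |y| * K |y| ∂ρ := by
    rw [hπdef, Measure.prod_apply mA₃]
    have hslice : (fun z => (ρ.prod ρ) (Prod.mk z ⁻¹' A₃))
        = fun z => ∫⁻ y, ({p : ℝ × ℝ | |p.1| < |p.2|}.indicator (fun p => K |p.2|)) (z, y) ∂ρ := by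
      funext z
      have hm : MeasurableSet (Prod.mk z ⁻¹' A₃ : Set (ℝ × ℝ)) :=
        measurable_prodMk_left mA₃
      rw [← Measure.prod_swap, Measure.map_apply measurable_swap hm]
      have hset : (Prod.swap ⁻¹' (Prod.mk z ⁻¹' A₃) : Set (ℝ × ℝ))
          = {q : ℝ × ℝ | |z| < |q.1| ∧ |q.2| < |q.1|} := by
        ext q; simp [hA₃def, Prod.swap, and_comm]
      rw [hset]
      have hm2 : MeasurableSet {q : ℝ × ℝ | |z| < |q.1| ∧ |q.2| < |q.1|} :=
        (measurableSet_lt measurable_const measurable_fst.abs).inter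
          (measurableSet_lt measurable_snd.abs measurable_fst.abs)
      rw [Measure.prod_apply hm2]
      congr 1
      funext y
      by_cases h : |z| < |y|
      · have : (Prod.mk y ⁻¹' {q : ℝ × ℝ | |z| < |q.1| ∧ |q.2| < |q.1|} : Set ℝ)
            = Ioo (-|y|) |y| := by
          ext x
          obtain ⟨hz1, hz2⟩ := abs_lt.mp h
          simp only [mem_preimage, mem_setOf_eq, mem_Ioo, abs_lt]
          tauto
        rw [this]
        simp [indicator, h, hKdef]
      · have : (Prod.mk y ⁻¹' {q : ℝ × ℝ | |z| < |q.1| ∧ |q.2| < |q.1|} : Set ℝ) = ∅ := by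
          ext x; simp [h]
        rw [this]
        simp [indicator, h]
    rw [hslice]
    have hFm : Measurable (fun p : ℝ × ℝ => ({p : ℝ × ℝ | |p.1| < |p.2|}.indicator
        (fun p => K |p.2|)) p) := by
      exact (mK.comp measurable_snd.abs).indicator
        (measurableSet_lt measurable_fst.abs measurable_snd.abs)
    rw [lintegral_lintegral_swap hFm.aemeasurable]
    congr 1
    funext y
    have : (fun z => ({p : ℝ × ℝ | |p.1| < |p.2|}.indicator (fun p => K |p.2|)) (z, y))
        = (Ioo (-|y|) |y|).indicator (fun _ => K |y|) := by
      funext z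
      by_cases h : |z| < |y|
      · simp [indicator, h, abs_lt.mp h]
      · have h2 : z ∉ Ioo (-|y|) |y| := by
          simp only [mem_Ioo, not_and_or]
          rcases abs_lt.not.mp (not_lt.mpr (not_lt.mp h)) with h''
          tauto
        simp [indicator, h, h2]
    rw [this, lintegral_indicator measurableSet_Ioo, setLIntegral_const]
  -- disjointness
  have d12 : Disjoint A₁ A₂ := by
    rw [Set.disjoint_left]
    rintro p ⟨h1, _⟩ ⟨h2, _⟩
    exact absurd (h1.trans_lt h2) (lt_irrefl _)
  have d13 : Disjoint A₁ A₃ := by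
    rw [Set.disjoint_left]
    rintro p ⟨_, h1⟩ ⟨h2, _⟩
    exact absurd (h1.trans_lt h2) (lt_irrefl _)
  have d23 : Disjoint A₂ A₃ := by
    rw [Set.disjoint_left]
    rintro p ⟨_, h1⟩ ⟨_, h2⟩
    exact absurd (h1.trans_lt h2) (lt_irrefl _)
  have hsum : π A₁ + π A₂ + π A₃ ≤ 1 := by
    have : π A₁ + π A₂ + π A₃ = π (A₁ ∪ A₂ ∪ A₃) := by
      rw [measure_union (by
        exact Set.disjoint_union_left.mpr ⟨d13, d23⟩) mA₃,
        measure_union d12 mA₂]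
    rw [this]
    exact prob_le_one
  -- lower bounds on π Aᵢ
  have low1 : 2 * ∫⁻ z in Ioi (0:ℝ), (H z)^2 ∂ρ ≤ π A₁ := by
    rw [hπA₁, ← evenT ρ hsym (fun t => (H t)^2) (mH.pow_const 2)]
    exact lintegral_mono' Measure.restrict_le_self le_rfl
  have low2 : 2 * ∫⁻ z in Ioi (0:ℝ), H z * K z ∂ρ ≤ π A₂ := by
    rw [hπA₂, ← evenT ρ hsym (fun t => H t * K t) (mH.mul mK)]
    exact lintegral_mono' Measure.restrict_le_self le_rfl
  have low3 : 2 * ∫⁻ z in Ioi (0:ℝ), (K z)^2 ∂ρ ≤ π A₃ := by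
    have e1 : π A₃ = ∫⁻ y, (K |y|)^2 ∂ρ := by
      rw [hπA₃]; congr 1; funext y; rw [sq]
    rw [e1, ← evenT ρ hsym (fun t => (K t)^2) (mK.pow_const 2)]
    exact lintegral_mono' Measure.restrict_le_self le_rfl
  -- combine
  have h2 : 2 * (∫⁻ z in Ioi (0:ℝ), (H z)^2 ∂ρ + ∫⁻ z in Ioi (0:ℝ), H z * K z ∂ρ
      + ∫⁻ z in Ioi (0:ℝ), (K z)^2 ∂ρ) ≤ 1 := by
    calc 2 * (∫⁻ z in Ioi (0:ℝ), (H z)^2 ∂ρ + ∫⁻ z in Ioi (0:ℝ), H z * K z ∂ρ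
        + ∫⁻ z in Ioi (0:ℝ), (K z)^2 ∂ρ)
        = 2 * ∫⁻ z in Ioi (0:ℝ), (H z)^2 ∂ρ + 2 * ∫⁻ z in Ioi (0:ℝ), H z * K z ∂ρ
          + 2 * ∫⁻ z in Ioi (0:ℝ), (K z)^2 ∂ρ := by ring
      _ ≤ π A₁ + π A₂ + π A₃ := add_le_add (add_le_add low1 low2) low3
      _ ≤ 1 := hsum
  rw [ENNReal.le_div_iff_mul_le (by norm_num) (by norm_num)]
  rw [mul_comm] at h2
  exact h2

lemma intOn {ν : Measure ℝ} [IsFiniteMeasure ν] {f : ℝ → ℝ} {s : Set ℝ} (hs : MeasurableSet s)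
    (hm : Measurable f) (B : ℝ) (hb : ∀ x ∈ s, |f x| ≤ B) : Integrable f (ν.restrict s) := by
  refine (integrable_const B).mono' hm.aestronglyMeasurable ?_
  refine (ae_restrict_iff' hs).2 (Filter.Eventually.of_forall fun x hx => ?_)
  simpa [Real.norm_eq_abs] using hb x hx

lemma tr_le_one {ν : Measure ℝ} [IsProbabilityMeasure ν] (A : Set ℝ) : (ν A).toReal ≤ 1 := by
  rw [← ENNReal.toReal_one]
  exact ENNReal.toReal_mono ENNReal.one_ne_top prob_le_one

end Stmt11Aux

open Stmt11Aux in
set_option maxHeartbeats 1000000 in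
theorem stmt_11 (c C : ℝ) (hc : 0 < c) (hC : 0 < C) (hC3 : C < 3)
    (hcC : C ^ 2 / (3 - C) ≤ c)
    (ρ μ : Measure ℝ) [IsProbabilityMeasure ρ] [IsProbabilityMeasure μ]
    (hsuppρ : ρ (Icc (-(1/2) : ℝ) (1/2))ᶜ = 0)
    (hsuppμ : μ (Icc (-(1/2) : ℝ) (1/2))ᶜ = 0)
    (hsymρ : Measure.map (fun x : ℝ => -x) ρ = ρ)
    (hsymμ : Measure.map (fun x : ℝ => -x) μ = μ)
    (hdom : ∀ A : Set ℝ, MeasurableSet A →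
      c * (ρ A).toReal ≤ (μ A).toReal ∧ (μ A).toReal ≤ C * (ρ A).toReal)
    (a r s m : ℝ)
    (ha : a = 2 * ∫ z in Ioc (0 : ℝ) (1/2), ((ρ (Ioc (-z) z)).toReal) ^ 2 ∂μ)
    (hr : r = 2 * ∫ z in Ioc (0 : ℝ) (1/2), z * (ρ (Ioc (-z) z)).toReal ∂μ)
    (hs : s = 2 * ∫ y in Ioc (0 : ℝ) (1/2), y * (μ (Ioc (-y) y)).toReal ∂ρ)
    (hm : m = r + s) :
    0 ≤ r - a * m := by
  classical
  set S : Set ℝ := Ioc (0:ℝ) (1/2) with hSdef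
  have mS : MeasurableSet S := measurableSet_Ioc
  have mGe : Measurable (fun z : ℝ => ρ (Ioc (-z) z)) := mono_Ioc ρ
  have mG : Measurable (fun z : ℝ => (ρ (Ioc (-z) z)).toReal) := mGe.ennreal_toReal
  have mHe : Measurable (fun z : ℝ => ρ (Icc (-z) z)) := mono_Icc ρ
  have mKe : Measurable (fun z : ℝ => ρ (Ioo (-z) z)) := mono_Ioo ρ
  -- measure domination
  have hle1 : (ENNReal.ofReal c) • ρ ≤ μ := by
    rw [Measure.le_iff]
    intro t ht
    have h := (hdom t ht).1
    have h2 : ENNReal.ofReal (c * (ρ t).toReal) ≤ μ t := by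
      rw [← ENNReal.ofReal_toReal (measure_ne_top μ t)]
      exact ENNReal.ofReal_le_ofReal h
    calc ((ENNReal.ofReal c) • ρ) t = ENNReal.ofReal c * ρ t := by
          rw [Measure.smul_apply, smul_eq_mul]
      _ = ENNReal.ofReal (c * (ρ t).toReal) := by
          rw [ENNReal.ofReal_mul hc.le, ENNReal.ofReal_toReal (measure_ne_top ρ t)]
      _ ≤ μ t := h2
  have hle2 : μ ≤ (ENNReal.ofReal C) • ρ := by
    rw [Measure.le_iff]
    intro t ht
    have h := (hdom t ht).2
    calc μ t = ENNReal.ofReal ((μ t).toReal) := (ENNReal.ofReal_toReal (measure_ne_top μ t)).symm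
      _ ≤ ENNReal.ofReal (C * (ρ t).toReal) := ENNReal.ofReal_le_ofReal h
      _ = ENNReal.ofReal C * ρ t := by
          rw [ENNReal.ofReal_mul hC.le, ENNReal.ofReal_toReal (measure_ne_top ρ t)]
      _ = ((ENNReal.ofReal C) • ρ) t := by rw [Measure.smul_apply, smul_eq_mul]
  -- Integrability of the main integrands
  have hfm : Measurable (fun z : ℝ => z * (ρ (Ioc (-z) z)).toReal) := measurable_id.mul mG
  have hfb : ∀ x ∈ S, |x * (ρ (Ioc (-x) x)).toReal| ≤ 1 := by
    intro x hx
    have h1 : 0 < x := hx.1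
    have h2 : x ≤ 1/2 := hx.2
    have h3 : (ρ (Ioc (-x) x)).toReal ≤ 1 := tr_le_one _
    have h4 : 0 ≤ (ρ (Ioc (-x) x)).toReal := ENNReal.toReal_nonneg
    rw [abs_mul, abs_of_pos h1, abs_of_nonneg h4]
    nlinarith
  have hint_fρ : Integrable (fun z : ℝ => z * (ρ (Ioc (-z) z)).toReal) (ρ.restrict S) :=
    intOn mS hfm 1 hfb
  have hint_fμ : Integrable (fun z : ℝ => z * (ρ (Ioc (-z) z)).toReal) (μ.restrict S) :=
    intOn mS hfm 1 hfb
  set Rb : ℝ := ∫ z in S, z * (ρ (Ioc (-z) z)).toReal ∂ρ with hRbdef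
  have hRb0 : 0 ≤ Rb :=
    setIntegral_nonneg mS (fun x hx => mul_nonneg hx.1.le ENNReal.toReal_nonneg)
  -- r bound
  have hrR : c * Rb ≤ ∫ z in S, z * (ρ (Ioc (-z) z)).toReal ∂μ := by
    have h1 : ∫ z in S, z * (ρ (Ioc (-z) z)).toReal ∂((ENNReal.ofReal c) • ρ) = c * Rb := by
      rw [Measure.restrict_smul, integral_smul_measure, ENNReal.toReal_ofReal hc.le,
        smul_eq_mul, hRbdef]
    rw [← h1]
    refine integral_mono_measure (Measure.restrict_mono (subset_refl S) hle1) ?_ hint_fμ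
    refine (ae_restrict_iff' mS).2 (Filter.Eventually.of_forall fun x hx => ?_)
    exact mul_nonneg hx.1.le ENNReal.toReal_nonneg
  -- s bound
  have hgmμ : Measurable (fun y : ℝ => y * (μ (Ioc (-y) y)).toReal) :=
    measurable_id.mul (mono_Ioc μ).ennreal_toReal
  have hsR : (∫ y in S, y * (μ (Ioc (-y) y)).toReal ∂ρ) ≤ C * Rb := by
    have h1 : C * Rb = ∫ z in S, C * (z * (ρ (Ioc (-z) z)).toReal) ∂ρ := by
      rw [integral_const_mul]
    rw [h1]
    refine setIntegral_mono_on ?_ ?_ mS ?_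
    · refine intOn mS hgmμ 1 ?_
      intro x hx
      have h1 : 0 < x := hx.1
      have h2 : x ≤ 1/2 := hx.2
      have h3 : (μ (Ioc (-x) x)).toReal ≤ 1 := tr_le_one _
      have h4 : 0 ≤ (μ (Ioc (-x) x)).toReal := ENNReal.toReal_nonneg
      rw [abs_mul, abs_of_pos h1, abs_of_nonneg h4]
      nlinarith
    · refine intOn mS (measurable_const.mul hfm) (C * 1) ?_
      intro x hx
      rw [abs_mul, abs_of_pos hC]
      exact mul_le_mul_of_nonneg_left (hfb x hx) hC.le
    · intro y hy
      have h := (hdom (Ioc (-y) y) measurableSet_Ioc).2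
      calc y * (μ (Ioc (-y) y)).toReal ≤ y * (C * (ρ (Ioc (-y) y)).toReal) :=
            mul_le_mul_of_nonneg_left h hy.1.le
        _ = C * (y * (ρ (Ioc (-y) y)).toReal) := by ring
  -- a bounds
  have hg2m : Measurable (fun z : ℝ => ((ρ (Ioc (-z) z)).toReal) ^ 2) := mG.pow_const 2
  have hg2b : ∀ x ∈ S, |((ρ (Ioc (-x) x)).toReal) ^ 2| ≤ 1 := by
    intro x _
    have h3 : (ρ (Ioc (-x) x)).toReal ≤ 1 := tr_le_one _
    have h4 : 0 ≤ (ρ (Ioc (-x) x)).toReal := ENNReal.toReal_nonneg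
    rw [abs_of_nonneg (sq_nonneg _)]
    nlinarith
  have hint_g2ρ : Integrable (fun z : ℝ => ((ρ (Ioc (-z) z)).toReal) ^ 2) (ρ.restrict S) :=
    intOn mS hg2m 1 hg2b
  have ha0 : 0 ≤ a := by
    rw [ha]
    have : 0 ≤ ∫ z in S, ((ρ (Ioc (-z) z)).toReal) ^ 2 ∂μ :=
      setIntegral_nonneg mS (fun x _ => sq_nonneg _)
    linarith
  have haC : (∫ z in S, ((ρ (Ioc (-z) z)).toReal) ^ 2 ∂μ)
      ≤ C * ∫ z in S, ((ρ (Ioc (-z) z)).toReal) ^ 2 ∂ρ := by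
    have h1 : ∫ z in S, ((ρ (Ioc (-z) z)).toReal) ^ 2 ∂((ENNReal.ofReal C) • ρ)
        = C * ∫ z in S, ((ρ (Ioc (-z) z)).toReal) ^ 2 ∂ρ := by
      rw [Measure.restrict_smul, integral_smul_measure, ENNReal.toReal_ofReal hC.le, smul_eq_mul]
    rw [← h1]
    refine integral_mono_measure (Measure.restrict_mono (subset_refl S) hle2)
      (Filter.Eventually.of_forall fun x => sq_nonneg _) ?_
    rw [Measure.restrict_smul]
    exact hint_g2ρ.smul_measure ENNReal.ofReal_ne_top
  -- the key bound  ∫_S g² dρ ≤ 1/6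
  have hsymρ' : Measure.map (Neg.neg : ℝ → ℝ) ρ = ρ := hsymρ
  have hpt : ∀ z ∈ S, ((ρ (Ioc (-z) z)).toReal) ^ 2
      ≤ (1/3) * (((ρ (Icc (-z) z)) ^ 2).toReal + ((ρ (Icc (-z) z)) * (ρ (Ioo (-z) z))).toReal
        + ((ρ (Ioo (-z) z)) ^ 2).toReal) := by
    intro z hz
    have hz0 : 0 < z := hz.1
    have hatom : ρ {-z} = ρ {z} := by
      have h1 : ρ {z} = ρ ((Neg.neg : ℝ → ℝ) ⁻¹' {z}) := by
        conv_lhs => rw [← hsymρ']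
        exact Measure.map_apply measurable_neg (measurableSet_singleton z)
      have h2 : ((Neg.neg : ℝ → ℝ) ⁻¹' {z}) = {-z} := by
        ext x
        simp only [mem_preimage, mem_singleton_iff, neg_eq_iff_eq_neg]
      rw [h1, h2]
    have hIcc : Icc (-z) z = {-z} ∪ Ioc (-z) z := by
      ext x
      simp only [mem_Icc, mem_union, mem_singleton_iff, mem_Ioc]
      constructor
      · rintro ⟨h1, h2⟩
        rcases eq_or_lt_of_le h1 with h | h
        · exact Or.inl h.symm
        · exact Or.inr ⟨h, h2⟩
      · rintro (rfl | ⟨h1, h2⟩)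
        · exact ⟨le_refl _, by linarith⟩
        · exact ⟨h1.le, h2⟩
    have hIoc : Ioc (-z) z = {z} ∪ Ioo (-z) z := by
      ext x
      simp only [mem_Ioc, mem_union, mem_singleton_iff, mem_Ioo]
      constructor
      · rintro ⟨h1, h2⟩
        rcases eq_or_lt_of_le h2 with h | h
        · exact Or.inl h
        · exact Or.inr ⟨h1, h⟩
      · rintro (rfl | ⟨h1, h2⟩)
        · exact ⟨by linarith, le_refl _⟩
        · exact ⟨h1, h2.le⟩
    have h1 : ρ (Icc (-z) z) = ρ {z} + ρ (Ioc (-z) z) := by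
      rw [hIcc, measure_union ?_ measurableSet_Ioc, hatom]
      rw [Set.disjoint_singleton_left]
      simp
    have h2 : ρ (Ioc (-z) z) = ρ {z} + ρ (Ioo (-z) z) := by
      rw [hIoc, measure_union ?_ measurableSet_Ioo]
      rw [Set.disjoint_singleton_left]
      simp
    have hh := congrArg ENNReal.toReal h1
    have hg := congrArg ENNReal.toReal h2
    rw [ENNReal.toReal_add (measure_ne_top _ _) (measure_ne_top _ _)] at hh hg
    rw [ENNReal.toReal_pow, ENNReal.toReal_pow, ENNReal.toReal_mul]
    set hv := (ρ (Icc (-z) z)).toReal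
    set gv := (ρ (Ioc (-z) z)).toReal
    set kv := (ρ (Ioo (-z) z)).toReal
    set wv := (ρ ({z} : Set ℝ)).toReal
    have hw0 : 0 ≤ wv := ENNReal.toReal_nonneg
    have h5 : hv = 2 * wv + kv := by linarith
    have key : gv ^ 2 = 1/3 * (hv ^ 2 + hv * kv + kv ^ 2) - wv ^ 2 / 3 := by
      rw [h5, hg]; ring
    linarith [key, sq_nonneg wv]
  have hintRHS : Integrable (fun z : ℝ => (1/3) * (((ρ (Icc (-z) z)) ^ 2).toReal
      + ((ρ (Icc (-z) z)) * (ρ (Ioo (-z) z))).toReal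
      + ((ρ (Ioo (-z) z)) ^ 2).toReal)) (ρ.restrict S) := by
    refine intOn mS ?_ 1 ?_
    · exact measurable_const.mul
        (((mHe.pow_const 2).ennreal_toReal.add (mHe.mul mKe).ennreal_toReal).add
          (mKe.pow_const 2).ennreal_toReal)
    · intro x _
      have b1 : ((ρ (Icc (-x) x)) ^ 2).toReal ≤ 1 := by
        rw [← ENNReal.toReal_one]
        exact ENNReal.toReal_mono ENNReal.one_ne_top (pow_le_one' prob_le_one 2)
      have b2 : ((ρ (Icc (-x) x)) * (ρ (Ioo (-x) x))).toReal ≤ 1 := by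
        rw [← ENNReal.toReal_one]
        exact ENNReal.toReal_mono ENNReal.one_ne_top (mul_le_one' prob_le_one prob_le_one)
      have b3 : ((ρ (Ioo (-x) x)) ^ 2).toReal ≤ 1 := by
        rw [← ENNReal.toReal_one]
        exact ENNReal.toReal_mono ENNReal.one_ne_top (pow_le_one' prob_le_one 2)
      have n1 : 0 ≤ ((ρ (Icc (-x) x)) ^ 2).toReal := ENNReal.toReal_nonneg
      have n2 : 0 ≤ ((ρ (Icc (-x) x)) * (ρ (Ioo (-x) x))).toReal := ENNReal.toReal_nonneg
      have n3 : 0 ≤ ((ρ (Ioo (-x) x)) ^ 2).toReal := ENNReal.toReal_nonneg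
      rw [abs_of_nonneg (by linarith)]
      linarith
  have hmono : (∫ z in S, ((ρ (Ioc (-z) z)).toReal) ^ 2 ∂ρ)
      ≤ ∫ z in S, (1/3) * (((ρ (Icc (-z) z)) ^ 2).toReal
        + ((ρ (Icc (-z) z)) * (ρ (Ioo (-z) z))).toReal
        + ((ρ (Ioo (-z) z)) ^ 2).toReal) ∂ρ :=
    setIntegral_mono_on hint_g2ρ hintRHS mS hpt
  -- evaluate the RHS via lintegrals
  set X : ℝ≥0∞ := ∫⁻ z in S, (ρ (Icc (-z) z)) ^ 2 ∂ρ with hXdef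
  set Y : ℝ≥0∞ := ∫⁻ z in S, (ρ (Icc (-z) z)) * (ρ (Ioo (-z) z)) ∂ρ with hYdef
  set Z : ℝ≥0∞ := ∫⁻ z in S, (ρ (Ioo (-z) z)) ^ 2 ∂ρ with hZdef
  have hfin : ∀ W : ℝ≥0∞, W ≤ 1 → W ≠ ⊤ := fun W hW => ne_top_of_le_ne_top ENNReal.one_ne_top hW
  have hXle : X ≤ 1 := by
    calc X ≤ ∫⁻ _ in S, (1:ℝ≥0∞) ∂ρ :=
          lintegral_mono fun z => pow_le_one' prob_le_one 2
      _ = 1 * ρ S := setLIntegral_const S 1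
      _ ≤ 1 := by rw [one_mul]; exact prob_le_one
  have hYle : Y ≤ 1 := by
    calc Y ≤ ∫⁻ _ in S, (1:ℝ≥0∞) ∂ρ :=
          lintegral_mono fun z => mul_le_one' prob_le_one prob_le_one
      _ = 1 * ρ S := setLIntegral_const S 1
      _ ≤ 1 := by rw [one_mul]; exact prob_le_one
  have hZle : Z ≤ 1 := by
    calc Z ≤ ∫⁻ _ in S, (1:ℝ≥0∞) ∂ρ :=
          lintegral_mono fun z => pow_le_one' prob_le_one 2
      _ = 1 * ρ S := setLIntegral_const S 1
      _ ≤ 1 := by rw [one_mul]; exact prob_le_one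
  have hIX : ∫ z in S, ((ρ (Icc (-z) z)) ^ 2).toReal ∂ρ = X.toReal :=
    integral_toReal ((mHe.pow_const 2).aemeasurable.restrict)
      (Filter.Eventually.of_forall fun z => ENNReal.pow_lt_top (measure_lt_top ρ _))
  have hIY : ∫ z in S, ((ρ (Icc (-z) z)) * (ρ (Ioo (-z) z))).toReal ∂ρ = Y.toReal :=
    integral_toReal ((mHe.mul mKe).aemeasurable.restrict)
      (Filter.Eventually.of_forall fun z =>
        ENNReal.mul_lt_top (measure_lt_top ρ _) (measure_lt_top ρ _))
  have hIZ : ∫ z in S, ((ρ (Ioo (-z) z)) ^ 2).toReal ∂ρ = Z.toReal :=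
    integral_toReal ((mKe.pow_const 2).aemeasurable.restrict)
      (Filter.Eventually.of_forall fun z => ENNReal.pow_lt_top (measure_lt_top ρ _))
  have hintX : Integrable (fun z : ℝ => ((ρ (Icc (-z) z)) ^ 2).toReal) (ρ.restrict S) := by
    refine intOn mS (mHe.pow_const 2).ennreal_toReal 1 ?_
    intro x _
    rw [abs_of_nonneg ENNReal.toReal_nonneg, ← ENNReal.toReal_one]
    exact ENNReal.toReal_mono ENNReal.one_ne_top (pow_le_one' prob_le_one 2)
  have hintY : Integrable (fun z : ℝ => ((ρ (Icc (-z) z)) * (ρ (Ioo (-z) z))).toReal)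
      (ρ.restrict S) := by
    refine intOn mS (mHe.mul mKe).ennreal_toReal 1 ?_
    intro x _
    rw [abs_of_nonneg ENNReal.toReal_nonneg, ← ENNReal.toReal_one]
    exact ENNReal.toReal_mono ENNReal.one_ne_top (mul_le_one' prob_le_one prob_le_one)
  have hintZ : Integrable (fun z : ℝ => ((ρ (Ioo (-z) z)) ^ 2).toReal) (ρ.restrict S) := by
    refine intOn mS (mKe.pow_const 2).ennreal_toReal 1 ?_
    intro x _
    rw [abs_of_nonneg ENNReal.toReal_nonneg, ← ENNReal.toReal_one]
    exact ENNReal.toReal_mono ENNReal.one_ne_top (pow_le_one' prob_le_one 2)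
  have hRHSval : (∫ z in S, (1/3) * (((ρ (Icc (-z) z)) ^ 2).toReal
      + ((ρ (Icc (-z) z)) * (ρ (Ioo (-z) z))).toReal
      + ((ρ (Ioo (-z) z)) ^ 2).toReal) ∂ρ) = (1/3) * (X.toReal + Y.toReal + Z.toReal) := by
    have hintXY : Integrable (fun z : ℝ => ((ρ (Icc (-z) z)) ^ 2).toReal
        + ((ρ (Icc (-z) z)) * (ρ (Ioo (-z) z))).toReal) (ρ.restrict S) := hintX.add hintY
    rw [integral_const_mul, integral_add hintXY hintZ, integral_add hintX hintY,
      hIX, hIY, hIZ]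
  -- sum bound from tripleBound
  have hsumXYZ : X + Y + Z ≤ 1/2 := by
    have hXm : X ≤ ∫⁻ z in Ioi (0:ℝ), (ρ (Icc (-z) z)) ^ 2 ∂ρ :=
      lintegral_mono' (Measure.restrict_mono Ioc_subset_Ioi_self (le_refl ρ)) (le_refl _)
    have hYm : Y ≤ ∫⁻ z in Ioi (0:ℝ), (ρ (Icc (-z) z)) * (ρ (Ioo (-z) z)) ∂ρ :=
      lintegral_mono' (Measure.restrict_mono Ioc_subset_Ioi_self (le_refl ρ)) (le_refl _)
    have hZm : Z ≤ ∫⁻ z in Ioi (0:ℝ), (ρ (Ioo (-z) z)) ^ 2 ∂ρ :=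
      lintegral_mono' (Measure.restrict_mono Ioc_subset_Ioi_self (le_refl ρ)) (le_refl _)
    exact le_trans (add_le_add (add_le_add hXm hYm) hZm) (tripleBound ρ hsymρ)
  have hsumReal : X.toReal + Y.toReal + Z.toReal ≤ 1/2 := by
    have hXY : X + Y ≠ ⊤ := by
      refine ENNReal.add_ne_top.2 ⟨hfin X hXle, hfin Y hYle⟩
    rw [← ENNReal.toReal_add (hfin X hXle) (hfin Y hYle),
      ← ENNReal.toReal_add hXY (hfin Z hZle)]
    have h12 : ((1:ℝ≥0∞)/2).toReal = 1/2 := by simp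
    rw [← h12]
    exact ENNReal.toReal_mono (by simp) hsumXYZ
  have hA6 : (∫ z in S, ((ρ (Ioc (-z) z)).toReal) ^ 2 ∂ρ) ≤ 1/6 := by
    calc (∫ z in S, ((ρ (Ioc (-z) z)).toReal) ^ 2 ∂ρ)
        ≤ (1/3) * (X.toReal + Y.toReal + Z.toReal) := by rw [← hRHSval]; exact hmono
      _ ≤ (1/3) * (1/2) := by
          have : (0:ℝ) ≤ 1/3 := by norm_num
          exact mul_le_mul_of_nonneg_left hsumReal this
      _ = 1/6 := by norm_num
  -- final arithmetic
  have h3C : (0:ℝ) < 3 - C := by linarith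
  have hc3 : C ^ 2 ≤ c * (3 - C) := by
    rw [div_le_iff₀ h3C] at hcC
    linarith
  have hr' : c * (2 * Rb) ≤ r := by
    rw [hr]
    have := hrR
    linarith
  have hs' : s ≤ C * (2 * Rb) := by
    rw [hs]
    linarith [hsR]
  have ha' : a ≤ C * (2 * (1/6)) := by
    rw [ha]
    have h1 := haC
    have h2 : C * (∫ z in S, ((ρ (Ioc (-z) z)).toReal) ^ 2 ∂ρ) ≤ C * (1/6) :=
      mul_le_mul_of_nonneg_left hA6 hC.le
    linarith
  have haC3 : 3 * a ≤ C := by linarith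
  have ha1 : a ≤ 1 := by linarith
  have hkey : a * (c + C) ≤ c := by nlinarith
  have e2 : (1 - a) * (c * (2 * Rb)) ≤ (1 - a) * r :=
    mul_le_mul_of_nonneg_left hr' (by linarith)
  have e3 : a * s ≤ a * (C * (2 * Rb)) := mul_le_mul_of_nonneg_left hs' ha0
  have e5 : 0 ≤ (2 * Rb) * (c - a * (c + C)) :=
    mul_nonneg (by linarith) (by linarith)
  have efin : (1 - a) * (c * (2 * Rb)) - a * (C * (2 * Rb)) = (2 * Rb) * (c - a * (c + C)) := by
    ring
  have : 0 ≤ r - a * (r + s) := by nlinarith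
  rw [hm]
  linarith
end

section
/- Let $\rho$ be the uniform probability distribution on $[-1/2,1/2]$ and $\mu$ any symmetric probability measure on $[-1/2,1/2]$. Define $T(\mu) = \int_0^{1/2} y\,\mu(-y,y]\,dy + \int_{[-1/2,1/2]} z^2\,\mu(dz)$. Then $T(\mu) \le 1/4$, with equality if and only if $\mu = \tfrac12(\delta_{-1/2} + \delta_{1/2})$. -/
open MeasureTheory Set ENNReal

private lemma measY12 (μ : Measure ℝ) : Measurable (fun y : ℝ => μ (Ioc (-y) y)) := by
  apply Monotone.measurable
  intro a b hab
  exact measure_mono (Ioc_subset_Ioc (neg_le_neg hab) hab)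

private lemma measS12 (μ : Measure ℝ) : Measurable (fun y : ℝ => μ {z : ℝ | y < |z|}) := by
  apply Antitone.measurable
  intro a b hab
  exact measure_mono (fun z hz => lt_of_le_of_lt hab hz)

private lemma lemA12 (μ : Measure ℝ) [IsProbabilityMeasure μ] :
    (∫ y in Icc (0:ℝ) (1/2), y * (μ (Ioc (-y) y)).toReal) =
      (∫⁻ y in Icc (0:ℝ) (1/2), ENNReal.ofReal y * μ (Ioc (-y) y)).toReal := by
  rw [integral_eq_lintegral_of_nonneg_ae]
  · congr 1
    refine lintegral_congr_ae ?_
    filter_upwards [ae_restrict_mem measurableSet_Icc] with y hy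
    rw [ENNReal.ofReal_mul hy.1, ENNReal.ofReal_toReal (measure_ne_top μ _)]
  · filter_upwards [ae_restrict_mem measurableSet_Icc] with y hy
    exact mul_nonneg hy.1 ENNReal.toReal_nonneg
  · exact (measurable_id.mul ((measY12 μ).ennreal_toReal)).aestronglyMeasurable

private lemma lemB12 (μ : Measure ℝ) [IsProbabilityMeasure μ] :
    (∫ z, z ^ 2 ∂μ) = (∫⁻ z, ENNReal.ofReal (z ^ 2) ∂μ).toReal := by
  rw [integral_eq_lintegral_of_nonneg_ae]
  · exact Filter.Eventually.of_forall fun z => sq_nonneg z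
  · exact (measurable_id.pow_const 2).aestronglyMeasurable

private lemma lemC012 (c : ℝ) (h0 : 0 ≤ c) (h1 : c ≤ 1/2) :
    (∫⁻ y in Icc (0:ℝ) (1/2), (if y < c then ENNReal.ofReal (2*y) else 0)) =
      ENNReal.ofReal (c^2) := by
  have hset : Iio c ∩ Icc (0:ℝ) (1/2) = Ico 0 c := by
    ext x
    simp only [mem_inter_iff, mem_Iio, mem_Icc, mem_Ico]
    constructor
    · rintro ⟨hx, hx0, _⟩; exact ⟨hx0, hx⟩
    · rintro ⟨hx0, hx⟩; exact ⟨hx, hx0, hx.le.trans h1⟩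
  have : (fun y : ℝ => if y < c then ENNReal.ofReal (2*y) else 0) =
      (Iio c).indicator (fun y => ENNReal.ofReal (2*y)) := by
    ext y; simp [Set.indicator_apply, mem_Iio]
  rw [this, lintegral_indicator measurableSet_Iio, Measure.restrict_restrict measurableSet_Iio,
    hset, ← ofReal_integral_eq_lintegral_ofReal]
  · congr 1
    rw [setIntegral_congr_set Ico_ae_eq_Ioc, ← intervalIntegral.integral_of_le h0]
    rw [intervalIntegral.integral_const_mul, integral_id]
    ring
  · exact ((continuous_const.mul continuous_id).integrableOn_Icc).mono_set Ico_subset_Icc_self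
  · filter_upwards [ae_restrict_mem measurableSet_Ico] with y hy
    have := hy.1; positivity

private lemma lemC12 (μ : Measure ℝ) [IsProbabilityMeasure μ]
    (hsupp : μ (Icc (-(1/2) : ℝ) (1/2))ᶜ = 0) :
    (∫⁻ z, ENNReal.ofReal (z ^ 2) ∂μ) =
      ∫⁻ y in Icc (0:ℝ) (1/2), ENNReal.ofReal (2*y) * μ {z : ℝ | y < |z|} := by
  have hae : ∀ᵐ z ∂μ, z ∈ Icc (-(1/2):ℝ) (1/2) := mem_ae_iff.mpr hsupp
  have h1 : (∫⁻ z, ENNReal.ofReal (z ^ 2) ∂μ) =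
      ∫⁻ z, (∫⁻ y in Icc (0:ℝ) (1/2), (if y < |z| then ENNReal.ofReal (2*y) else 0)) ∂μ := by
    refine lintegral_congr_ae ?_
    filter_upwards [hae] with z hz
    rw [lemC012 |z| (abs_nonneg z) (abs_le.mpr ⟨hz.1, hz.2⟩), sq_abs]
  rw [h1, lintegral_lintegral_swap]
  · refine lintegral_congr fun y => ?_
    have hms : MeasurableSet {z : ℝ | y < |z|} :=
      measurableSet_lt measurable_const measurable_abs
    have : (fun z : ℝ => if y < |z| then ENNReal.ofReal (2*y) else 0) =
        ({z : ℝ | y < |z|}).indicator (fun _ => ENNReal.ofReal (2*y)) := by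
      ext z; simp [Set.indicator_apply]
    rw [this, lintegral_indicator hms, setLIntegral_const]
  · apply Measurable.aemeasurable
    apply Measurable.ite
    · exact measurableSet_lt measurable_snd measurable_fst.abs
    · exact ENNReal.measurable_ofReal.comp (measurable_const.mul measurable_snd)
    · exact measurable_const

theorem stmt_12 (μ : Measure ℝ) [IsProbabilityMeasure μ]
    (hsupp : μ (Icc (-(1/2) : ℝ) (1/2))ᶜ = 0)
    (hsym : Measure.map (fun x : ℝ => -x) μ = μ)
    (T : ℝ)
    (hT : T = (∫ y in Icc (0 : ℝ) (1/2), y * (μ (Ioc (-y) y)).toReal) +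
      ∫ z, z ^ 2 ∂μ) :
    T ≤ 1/4 ∧
      (T = 1/4 ↔
        μ = (2 : ℝ≥0∞)⁻¹ • (Measure.dirac (-(1/2) : ℝ) + Measure.dirac (1/2 : ℝ))) := by
  -- notation
  have hmeas1 : Measurable (fun y : ℝ => ENNReal.ofReal y * μ (Ioc (-y) y)) :=
    (ENNReal.measurable_ofReal.comp measurable_id).mul (measY12 μ)
  have hmeas2 : Measurable (fun y : ℝ => ENNReal.ofReal (2*y) * μ {z : ℝ | y < |z|}) :=
    (ENNReal.measurable_ofReal.comp (measurable_const.mul measurable_id)).mul (measS12 μ)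
  have hmeash : Measurable (fun y : ℝ =>
      ENNReal.ofReal y * μ (Ioc (-y) y) + ENNReal.ofReal (2*y) * μ {z : ℝ | y < |z|}) :=
    hmeas1.add hmeas2
  have hmsS : ∀ y : ℝ, MeasurableSet {z : ℝ | y < |z|} := fun y =>
    measurableSet_lt measurable_const measurable_abs
  have hdisjsum : ∀ y : ℝ, μ (Ioc (-y) y) + μ {z : ℝ | y < |z|} ≤ 1 := by
    intro y
    have hdisj : Disjoint (Ioc (-y) y) {z : ℝ | y < |z|} := by
      rw [Set.disjoint_left]
      intro z hz hz2
      exact absurd (abs_le.mpr ⟨hz.1.le, hz.2⟩) (not_le.mpr hz2)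
    rw [← measure_union hdisj (hmsS y)]
    exact (measure_mono (subset_univ _)).trans_eq measure_univ
  have hptle : ∀ y : ℝ,
      ENNReal.ofReal y * μ (Ioc (-y) y) + ENNReal.ofReal (2*y) * μ {z : ℝ | y < |z|}
        ≤ ENNReal.ofReal (2*y) := by
    intro y
    rcases le_or_gt 0 y with hy | hy
    · calc ENNReal.ofReal y * μ (Ioc (-y) y) + ENNReal.ofReal (2*y) * μ {z : ℝ | y < |z|}
          ≤ ENNReal.ofReal (2*y) * μ (Ioc (-y) y) + ENNReal.ofReal (2*y) * μ {z : ℝ | y < |z|} := by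
            gcongr
            linarith
        _ = ENNReal.ofReal (2*y) * (μ (Ioc (-y) y) + μ {z : ℝ | y < |z|}) := (mul_add _ _ _).symm
        _ ≤ ENNReal.ofReal (2*y) * 1 := by gcongr; exact hdisjsum y
        _ = ENNReal.ofReal (2*y) := mul_one _
    · simp [ENNReal.ofReal_of_nonpos hy.le, ENNReal.ofReal_of_nonpos (by linarith : 2*y ≤ 0)]
  have hG : (∫⁻ y in Icc (0:ℝ) (1/2), ENNReal.ofReal (2*y)) = ENNReal.ofReal (1/4) := by
    rw [← ofReal_integral_eq_lintegral_ofReal]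
    · congr 1
      rw [setIntegral_congr_set Ioc_ae_eq_Icc.symm,
        ← intervalIntegral.integral_of_le (by norm_num : (0:ℝ) ≤ 1/2),
        intervalIntegral.integral_const_mul, integral_id]
      norm_num
    · exact (continuous_const.mul continuous_id).integrableOn_Icc
    · filter_upwards [ae_restrict_mem measurableSet_Icc] with y hy
      have := hy.1
      positivity
  set L1 := ∫⁻ y in Icc (0:ℝ) (1/2), ENNReal.ofReal y * μ (Ioc (-y) y) with hL1def
  set L2 := ∫⁻ y in Icc (0:ℝ) (1/2), ENNReal.ofReal (2*y) * μ {z : ℝ | y < |z|} with hL2def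
  have hLsum : (∫⁻ y in Icc (0:ℝ) (1/2),
      (ENNReal.ofReal y * μ (Ioc (-y) y) + ENNReal.ofReal (2*y) * μ {z : ℝ | y < |z|})) =
      L1 + L2 := lintegral_add_left hmeas1 _
  have hLle : L1 + L2 ≤ ENNReal.ofReal (1/4) := by
    rw [← hLsum]
    exact le_trans (lintegral_mono hptle) hG.le
  have hfin1 : L1 ≠ ⊤ := ne_top_of_le_ne_top ENNReal.ofReal_ne_top (le_trans le_self_add hLle)
  have hfin2 : L2 ≠ ⊤ := ne_top_of_le_ne_top ENNReal.ofReal_ne_top (le_trans le_add_self hLle)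
  have hTeq : T = (L1 + L2).toReal := by
    rw [hT, lemA12 μ, lemB12 μ, lemC12 μ hsupp, ← ENNReal.toReal_add hfin1 hfin2]
  have hTle : T ≤ 1/4 := by
    rw [hTeq]
    calc (L1 + L2).toReal ≤ (ENNReal.ofReal (1/4)).toReal :=
          ENNReal.toReal_mono ENNReal.ofReal_ne_top hLle
      _ = 1/4 := ENNReal.toReal_ofReal (by norm_num)
  refine ⟨hTle, ?_, ?_⟩
  · -- equality case forward
    intro hTq
    have hEq : L1 + L2 = ENNReal.ofReal (1/4) := by
      have hne : L1 + L2 ≠ ⊤ := ENNReal.add_ne_top.mpr ⟨hfin1, hfin2⟩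
      rw [← ENNReal.ofReal_toReal hne, ← hTeq, hTq]
    have hsum_eq : (∫⁻ y in Icc (0:ℝ) (1/2),
        (ENNReal.ofReal y * μ (Ioc (-y) y) + ENNReal.ofReal (2*y) * μ {z : ℝ | y < |z|})) =
        ENNReal.ofReal (1/4) := hLsum.trans hEq
    have hzero : (∫⁻ y in Icc (0:ℝ) (1/2),
        (ENNReal.ofReal (2*y) -
          (ENNReal.ofReal y * μ (Ioc (-y) y) + ENNReal.ofReal (2*y) * μ {z : ℝ | y < |z|}))) = 0 := by
      rw [lintegral_sub hmeash (by rw [hsum_eq]; exact ENNReal.ofReal_ne_top)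
        (Filter.Eventually.of_forall hptle), hG, hsum_eq, tsub_self]
    have haeq : ∀ᵐ y ∂(volume.restrict (Icc (0:ℝ) (1/2))),
        ENNReal.ofReal y * μ (Ioc (-y) y) + ENNReal.ofReal (2*y) * μ {z : ℝ | y < |z|} =
          ENNReal.ofReal (2*y) := by
      have := (lintegral_eq_zero_iff
        ((ENNReal.measurable_ofReal.comp (measurable_const.mul measurable_id)).sub hmeash)).mp hzero
      filter_upwards [this] with y hy
      exact le_antisymm (hptle y) (tsub_eq_zero_iff_le.mp hy)
    have hker : ∀ᵐ y ∂(volume : Measure ℝ),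
        y ∈ Icc (0:ℝ) (1/2) → (0 < y → μ (Ioc (-y) y) = 0) := by
      rw [← ae_restrict_iff' measurableSet_Icc]
      filter_upwards [haeq] with y hy hpos
      -- arithmetic derivation
      have hfa : ENNReal.ofReal y * μ (Ioc (-y) y) ≠ ⊤ :=
        ENNReal.mul_ne_top ENNReal.ofReal_ne_top (measure_ne_top μ _)
      have hfb : ENNReal.ofReal (2*y) * μ {z : ℝ | y < |z|} ≠ ⊤ :=
        ENNReal.mul_ne_top ENNReal.ofReal_ne_top (measure_ne_top μ _)
      have h' : y * (μ (Ioc (-y) y)).toReal + (2*y) * (μ {z : ℝ | y < |z|}).toReal = 2*y := by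
        have := congrArg ENNReal.toReal hy
        rwa [ENNReal.toReal_add hfa hfb, ENNReal.toReal_mul, ENNReal.toReal_mul,
          ENNReal.toReal_ofReal hpos.le, ENNReal.toReal_ofReal (by linarith)] at this
      have hab' : (μ (Ioc (-y) y)).toReal + (μ {z : ℝ | y < |z|}).toReal ≤ 1 := by
        have := ENNReal.toReal_mono one_ne_top (hdisjsum y)
        rwa [ENNReal.toReal_add (measure_ne_top μ _) (measure_ne_top μ _), ENNReal.toReal_one] at this
      have ha0 : (μ (Ioc (-y) y)).toReal = 0 := by
        nlinarith [ENNReal.toReal_nonneg (a := μ (Ioc (-y) y)),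
          ENNReal.toReal_nonneg (a := μ {z : ℝ | y < |z|})]
      rcases (ENNReal.toReal_eq_zero_iff _).mp ha0 with h | h
      · exact h
      · exact absurd h (measure_ne_top μ _)
    have hnull : ∀ c : ℝ, c < 1/2 → μ (Ioc (-c) c) = 0 := by
      intro c hc
      rcases lt_or_ge c 0 with h | h
      · rw [Ioc_eq_empty (not_lt.mpr (by linarith))]
        exact measure_empty
      · by_contra hne
        have hbad : Ioc c (1/2) ⊆
            {y : ℝ | ¬ (y ∈ Icc (0:ℝ) (1/2) → (0 < y → μ (Ioc (-y) y) = 0))} := by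
          intro y hy
          intro hcon
          apply hne
          exact measure_mono_null (Ioc_subset_Ioc (neg_le_neg hy.1.le) hy.1.le)
            (hcon ⟨le_trans h hy.1.le, hy.2⟩ (lt_of_le_of_lt h hy.1))
        have h0 := measure_mono_null hbad (ae_iff.mp hker)
        rw [Real.volume_Ioc] at h0
        rw [ENNReal.ofReal_eq_zero] at h0
        linarith
    have hIoo : μ (Ioo (-(1/2):ℝ) (1/2)) = 0 := by
      have hcover : Ioo (-(1/2):ℝ) (1/2) ⊆
          ⋃ n : ℕ, Ioc (-(1/2 - 1/(n+1) : ℝ)) (1/2 - 1/(n+1)) := by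
        intro z hz
        have habs : |z| < 1/2 := abs_lt.mpr ⟨hz.1, hz.2⟩
        obtain ⟨n, hn⟩ := exists_nat_one_div_lt (by linarith : (0:ℝ) < 1/2 - |z|)
        refine mem_iUnion.mpr ⟨n, ?_⟩
        have h2 : |z| < 1/2 - 1/(n+1) := by linarith
        obtain ⟨hl, hr⟩ := abs_lt.mp h2
        exact ⟨hl, hr.le⟩
      refine measure_mono_null hcover (measure_iUnion_null fun n => hnull _ ?_)
      have : (0:ℝ) < 1/(n+1) := by positivity
      linarith
    have hmp : MeasurableSet ({-(1/2), (1/2)} : Set ℝ) :=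
      (measurableSet_singleton _).insert _
    have hpairc : μ (({-(1/2), (1/2)} : Set ℝ))ᶜ = 0 := by
      apply measure_mono_null _ (measure_union_null hsupp hIoo)
      intro z hz
      simp only [mem_compl_iff, mem_insert_iff, mem_singleton_iff] at hz
      push_neg at hz
      rcases em (z ∈ Icc (-(1/2):ℝ) (1/2)) with h | h
      · exact Or.inr ⟨lt_of_le_of_ne h.1 (Ne.symm hz.1), lt_of_le_of_ne h.2 hz.2⟩
      · exact Or.inl h
    have hatom : μ {(1/2:ℝ)} = μ {(-(1/2):ℝ)} := by
      conv_rhs => rw [← hsym]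
      rw [Measure.map_apply measurable_neg (measurableSet_singleton _)]
      congr 1
      ext x
      simp [neg_eq_iff_eq_neg]
    have hpair1 : μ ({-(1/2), (1/2)} : Set ℝ) = 1 := by
      have h2 := measure_add_measure_compl hmp (μ := μ)
      rw [hpairc, add_zero, measure_univ] at h2
      exact h2
    have hone : μ {(-(1/2):ℝ)} + μ {(1/2:ℝ)} = 1 := by
      rw [← hpair1, show ({-(1/2), (1/2)} : Set ℝ) = {-(1/2)} ∪ {(1/2)} from rfl,
        measure_union (by simp; norm_num) (measurableSet_singleton _)]
    have hhalf : μ {(1/2:ℝ)} = 2⁻¹ := by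
      rw [hatom.symm] at hone
      have h2 : 2 * μ {(1/2:ℝ)} = 1 := by rw [two_mul]; exact hone
      calc μ {(1/2:ℝ)} = 2⁻¹ * (2 * μ {(1/2:ℝ)}) := by
            rw [← mul_assoc, ENNReal.inv_mul_cancel (by norm_num) (by norm_num), one_mul]
        _ = 2⁻¹ := by rw [h2, mul_one]
    have hhalf' : μ {(-(1/2):ℝ)} = 2⁻¹ := hatom.symm ▸ hhalf
    refine Measure.ext fun s hs => ?_
    have hdiff : μ (s \ ({-(1/2), (1/2)} : Set ℝ)) = 0 :=
      measure_mono_null (fun x hx => hx.2) hpairc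
    have hdecomp : μ s = μ (s ∩ ({-(1/2), (1/2)} : Set ℝ)) := by
      have h3 := measure_inter_add_diff (μ := μ) s hmp
      rw [hdiff, add_zero] at h3
      exact h3.symm
    rw [hdecomp, Measure.smul_apply, Measure.add_apply,
      Measure.dirac_apply' _ hs, Measure.dirac_apply' _ hs, smul_eq_mul]
    by_cases ha : (-(1/2):ℝ) ∈ s <;> by_cases hb : (1/2:ℝ) ∈ s
    · have hss : s ∩ ({-(1/2), (1/2)} : Set ℝ) = {-(1/2), (1/2)} := by
        ext x
        simp only [mem_inter_iff, mem_insert_iff, mem_singleton_iff]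
        constructor
        · exact fun h => h.2
        · rintro (rfl | rfl)
          exacts [⟨ha, Or.inl rfl⟩, ⟨hb, Or.inr rfl⟩]
      rw [hss, hpair1, Set.indicator_of_mem ha, Set.indicator_of_mem hb]
      simp only [Pi.one_apply]
      rw [one_add_one_eq_two]
      exact (ENNReal.inv_mul_cancel (by norm_num) (by norm_num)).symm
    · have hss : s ∩ ({-(1/2), (1/2)} : Set ℝ) = {-(1/2)} := by
        ext x
        simp only [mem_inter_iff, mem_insert_iff, mem_singleton_iff]
        constructor
        · rintro ⟨hxs, (rfl | rfl)⟩
          · rfl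
          · exact absurd hxs hb
        · rintro rfl; exact ⟨ha, Or.inl rfl⟩
      rw [hss, hhalf', Set.indicator_of_mem ha, Set.indicator_of_notMem hb]
      simp
    · have hss : s ∩ ({-(1/2), (1/2)} : Set ℝ) = {(1/2)} := by
        ext x
        simp only [mem_inter_iff, mem_insert_iff, mem_singleton_iff]
        constructor
        · rintro ⟨hxs, (rfl | rfl)⟩
          · exact absurd hxs ha
          · rfl
        · rintro rfl; exact ⟨hb, Or.inr rfl⟩
      rw [hss, hhalf, Set.indicator_of_notMem ha, Set.indicator_of_mem hb]
      simp
    · have hss : s ∩ ({-(1/2), (1/2)} : Set ℝ) = ∅ := by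
        ext x
        simp only [mem_inter_iff, mem_insert_iff, mem_singleton_iff, mem_empty_iff_false,
          iff_false, not_and]
        rintro hxs (rfl | rfl)
        · exact ha hxs
        · exact hb hxs
      rw [hss, measure_empty, Set.indicator_of_notMem ha, Set.indicator_of_notMem hb]
      simp
  · -- reverse direction
    intro hμ
    haveI hPM : IsProbabilityMeasure
        ((2 : ℝ≥0∞)⁻¹ • (Measure.dirac (-(1/2) : ℝ) + Measure.dirac (1/2 : ℝ))) := by
      constructor
      rw [Measure.smul_apply, Measure.add_apply, measure_univ, measure_univ, smul_eq_mul,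
        one_add_one_eq_two]
      exact ENNReal.inv_mul_cancel (by norm_num) (by norm_num)
    rw [hμ] at hT
    have hae1 : ∀ᵐ y ∂(volume : Measure ℝ), y ≠ (1/2:ℝ) := by
      rw [ae_iff]
      have hset1 : {y : ℝ | ¬ y ≠ (1/2:ℝ)} = {(1/2:ℝ)} := by ext x; simp
      rw [hset1]
      exact measure_singleton _
    have hz1 : (∫ y in Icc (0:ℝ) (1/2), y *
        (((2 : ℝ≥0∞)⁻¹ • (Measure.dirac (-(1/2) : ℝ) + Measure.dirac (1/2 : ℝ)))
          (Ioc (-y) y)).toReal) = 0 := by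
      have haez : ∀ᵐ y ∂(volume.restrict (Icc (0:ℝ) (1/2))),
          y * (((2 : ℝ≥0∞)⁻¹ • (Measure.dirac (-(1/2) : ℝ) + Measure.dirac (1/2 : ℝ)))
            (Ioc (-y) y)).toReal = 0 := by
        filter_upwards [ae_restrict_mem measurableSet_Icc, ae_restrict_of_ae hae1] with y hy hy2
        have hIoc : ((2 : ℝ≥0∞)⁻¹ • (Measure.dirac (-(1/2) : ℝ) + Measure.dirac (1/2 : ℝ)))
            (Ioc (-y) y) = 0 := by
          rw [Measure.smul_apply, Measure.add_apply,
            Measure.dirac_apply' _ measurableSet_Ioc, Measure.dirac_apply' _ measurableSet_Ioc,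
            Set.indicator_of_notMem (show (-(1/2):ℝ) ∉ Ioc (-y) y by
              intro hmem; have h1 := hmem.1; have h2 := hy.2; simp only [neg_lt_neg_iff] at h1
              linarith),
            Set.indicator_of_notMem (show (1/2:ℝ) ∉ Ioc (-y) y by
              intro hmem; exact hy2 (le_antisymm hy.2 hmem.2))]
          simp
        rw [hIoc]
        simp
      rw [integral_congr_ae haez, integral_zero]
    have hm2 : Measurable fun z : ℝ => ENNReal.ofReal (z^2) :=
      ENNReal.measurable_ofReal.comp (measurable_id.pow_const 2)
    have hz2 : (∫ z, z^2
        ∂((2 : ℝ≥0∞)⁻¹ • (Measure.dirac (-(1/2) : ℝ) + Measure.dirac (1/2 : ℝ)))) = 1/4 := by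
      rw [lemB12 _, lintegral_smul_measure, lintegral_add_measure, lintegral_dirac' _ hm2,
        lintegral_dirac' _ hm2]
      rw [smul_eq_mul, ENNReal.toReal_mul, ENNReal.toReal_add ENNReal.ofReal_ne_top ENNReal.ofReal_ne_top,
        ENNReal.toReal_ofReal (by positivity), ENNReal.toReal_ofReal (by positivity)]
      norm_num [ENNReal.toReal_inv]
    rw [hT, hz1, hz2]
    norm_num
end
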